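/- arXiv:1609.04692 — 5 statements merged into one kernel-verified Lean document; each statement's English description precedes it below -/
import Mathlib

section
/- Let G be a finite connected simple graph admitting an isometric embedding into a hypercube, i.e., a map φ : V(G) → ({0,1}^n for some n) such that the shortest-path distance d_G(u,v) equals the Hamming distance between φ(u) and φ(v) for all vertices u, v. Then for any two edges e = ab and f = xy of G, the edge distance d̂(e,f) = min{d(a,x), d(a,y), d(b,x), d(b,y)} equals the number of coordinates k ∈ {1,…,n} such that φ(a)_k = φ(b)_k, φ(x)_k = φ(y)_k, and φ(a)_k ≠ φ(x)_k. -/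
open scoped Classical

/-- The minimum distance between endpoints of two edges (given as unordered pairs):
`d̂(ab, xy) = min {d(a,x), d(a,y), d(b,x), d(b,y)}`. -/
noncomputable def edgeDhat {V : Type*} (G : SimpleGraph V) : Sym2 V → Sym2 V → ℕ :=
  Sym2.lift₂
    ⟨fun a b x y => min (min (G.dist a x) (G.dist a y)) (min (G.dist b x) (G.dist b y)),
      fun a b x y => by dsimp only; constructor <;> omega⟩

/-- The finset of edges of a graph on a finite vertex type. -/
noncomputable def edgeFS {V : Type*} [Fintype V] (G : SimpleGraph V) : Finset (Sym2 V) :=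
  (Set.toFinite G.edgeSet).toFinset

private lemma bool_res (p q r : Bool) (h1 : p ≠ q) (h2 : p ≠ r) : q = r := by
  cases p <;> cases q <;> cases r <;> simp_all

private lemma hamming_key (n : ℕ) (A B X Y : Fin n → Bool)
    (hAB : hammingDist A B = 1) (hXY : hammingDist X Y = 1) :
    min (min (hammingDist A X) (hammingDist A Y)) (min (hammingDist B X) (hammingDist B Y)) =
      (Finset.univ.filter (fun k : Fin n => A k = B k ∧ X k = Y k ∧ A k ≠ X k)).card := by
  set S := Finset.univ.filter (fun k : Fin n => A k = B k ∧ X k = Y k ∧ A k ≠ X k) with hS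
  obtain ⟨i, hi⟩ := Finset.card_eq_one.mp hAB
  obtain ⟨j, hj⟩ := Finset.card_eq_one.mp hXY
  have hiAB : A i ≠ B i := by
    have : i ∈ ({i} : Finset (Fin n)) := Finset.mem_singleton_self i
    rw [← hi] at this; simpa [hammingDist] using this
  have hAk : ∀ k, k ≠ i → A k = B k := by
    intro k hk
    by_contra h
    have : k ∈ (Finset.univ.filter fun k => A k ≠ B k) := by simp [h]
    rw [show (Finset.univ.filter fun k => A k ≠ B k) = {i} by
      rw [← hi]] at this
    exact hk (Finset.mem_singleton.mp this)
  have hjXY : X j ≠ Y j := by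
    have : j ∈ ({j} : Finset (Fin n)) := Finset.mem_singleton_self j
    rw [← hj] at this; simpa [hammingDist] using this
  have hXk : ∀ k, k ≠ j → X k = Y k := by
    intro k hk
    by_contra h
    have : k ∈ (Finset.univ.filter fun k => X k ≠ Y k) := by simp [h]
    rw [show (Finset.univ.filter fun k => X k ≠ Y k) = {j} by
      rw [← hj]] at this
    exact hk (Finset.mem_singleton.mp this)
  -- lower bounds
  have cardlb : ∀ (u v : Fin n → Bool), (∀ k, A k = B k → u k = A k) →
      (∀ k, X k = Y k → v k = X k) → S.card ≤ hammingDist u v := by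
    intro u v hu hv
    apply Finset.card_le_card
    intro k hk
    simp only [hS, Finset.mem_filter, Finset.mem_univ, true_and] at hk
    obtain ⟨h1, h2, h3⟩ := hk
    have : u k ≠ v k := by rw [hu k h1, hv k h2]; exact h3
    simpa [hammingDist] using this
  have lAX := cardlb A X (fun k _ => rfl) (fun k _ => rfl)
  have lAY := cardlb A Y (fun k _ => rfl) (fun k h => h.symm)
  have lBX := cardlb B X (fun k h => h.symm) (fun k _ => rfl)
  have lBY := cardlb B Y (fun k h => h.symm) (fun k h => h.symm)
  -- upper bound: choose endpoints
  have cardub : ∀ (u v : Fin n → Bool), (∀ k, k ≠ i → u k = A k) → (∀ k, k ≠ j → v k = X k) →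
      u i = X i → v j = u j → hammingDist u v ≤ S.card := by
    intro u v hu hv hui hvj
    apply Finset.card_le_card
    intro k hk
    have huv : u k ≠ v k := by simpa [hammingDist] using hk
    simp only [hS, Finset.mem_filter, Finset.mem_univ, true_and]
    by_cases hkj : k = j
    · subst hkj; exact absurd hvj.symm huv
    · by_cases hki : k = i
      · subst hki
        exact absurd (hui.trans (hv k hkj).symm) huv
      · refine ⟨hAk k hki, hXk k hkj, ?_⟩
        rw [← hu k hki, ← hv k hkj]; exact huv
  by_cases hA : A i = X i
  · by_cases hX : X j = A j
    · have := cardub A X (fun k _ => rfl) (fun k _ => rfl) hA hX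
      omega
    · have := cardub A Y (fun k _ => rfl) (fun k hk => (hXk k hk).symm) hA
        (bool_res (X j) (Y j) (A j) hjXY hX)
      omega
  · have hBi : B i = X i := bool_res (A i) (B i) (X i) hiAB hA
    by_cases hX : X j = B j
    · have := cardub B X (fun k hk => (hAk k hk).symm) (fun k _ => rfl) hBi hX
      omega
    · have := cardub B Y (fun k hk => (hAk k hk).symm) (fun k hk => (hXk k hk).symm) hBi
        (bool_res (X j) (Y j) (B j) hjXY hX)
      omega

/-- If `G` is a finite connected graph isometrically embedded (via `φ`) into a
hypercube `{0,1}^n` (i.e. graph distance equals Hamming distance), then for any two edges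
`e = ab` and `f = xy` of `G`, the edge distance
`d̂(e,f) = min {d(a,x), d(a,y), d(b,x), d(b,y)}` equals the number of coordinates `k` with
`φ(a)_k = φ(b)_k`, `φ(x)_k = φ(y)_k` and `φ(a)_k ≠ φ(x)_k`. -/
theorem edgeDhat_eq_card_coords {V : Type*} [Fintype V] (n : ℕ) (G : SimpleGraph V)
    (hG : G.Connected) (φ : V → Fin n → Bool)
    (hφ : ∀ u v : V, G.dist u v = hammingDist (φ u) (φ v))
    (a b x y : V) (hab : G.Adj a b) (hxy : G.Adj x y) :
    min (min (G.dist a x) (G.dist a y)) (min (G.dist b x) (G.dist b y)) =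
      (Finset.univ.filter
        (fun k : Fin n => φ a k = φ b k ∧ φ x k = φ y k ∧ φ a k ≠ φ x k)).card := by
  have hAB : hammingDist (φ a) (φ b) = 1 := by
    rw [← hφ, SimpleGraph.dist_eq_one_iff_adj]; exact hab
  have hXY : hammingDist (φ x) (φ y) = 1 := by
    rw [← hφ, SimpleGraph.dist_eq_one_iff_adj]; exact hxy
  rw [hφ a x, hφ a y, hφ b x, hφ b y]
  exact hamming_key n (φ a) (φ b) (φ x) (φ y) hAB hXY
end

section
/- Let G be a finite connected simple graph admitting an isometric embedding φ : V(G) → {0,1}^n with d_G(u,v) equal to the Hamming distance of φ(u), φ(v) for all u, v. For coordinates k ≠ l and values i, j ∈ {0,1}, let m_{kl}^{ij} be the number of edges e = ab of G with φ(a)_k = φ(b)_k = i and φ(a)_l = φ(b)_l = j. Then Σ_{e ∈ E(G)} Σ_{f ∈ E(G)} d̂(e,f)² = 2·Ŵ_e(G) + 4·Σ_{1 ≤ k < l ≤ n} ( m_{kl}^{11}·m_{kl}^{00} + m_{kl}^{10}·m_{kl}^{01} ). -/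
open scoped Classical

/-- `Ŵ_e(G) = Σ_{{e,f} ⊆ E(G)} d̂(e,f)`, the sum over unordered pairs of distinct edges
(computed as half of the sum over ordered pairs of distinct edges). -/
noncomputable def hatEdgeWiener {V : Type*} [Fintype V] (G : SimpleGraph V) : ℚ :=
  (∑ p ∈ (edgeFS G).offDiag, (edgeDhat G p.1 p.2 : ℚ)) / 2

/-- `m_{kl}^{ij}`: the number of edges `e = ab` of `G` both of whose endpoints have `k`-th
coordinate equal to `i` and `l`-th coordinate equal to `j` under the embedding `φ`. -/
noncomputable def mSide {V : Type*} [Fintype V] (G : SimpleGraph V) {n : ℕ}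
    (φ : V → Fin n → Bool) (k l : Fin n) (i j : Bool) : ℕ :=
  ((edgeFS G).filter (fun e => ∀ v ∈ e, φ v k = i ∧ φ v l = j)).card

/-! In a partial cube every edge flips exactly one coordinate, so `d̂(e, f)` is the number of
coordinates `k` on which `e` and `f` lie on opposite sides of `E_k`: a pair of endpoints agreeing
on both flipped coordinates realises the minimum. Hence `d̂(e, f)²` is `d̂(e, f)` plus the number of
ordered pairs `k ≠ l` of such coordinates. The linear part sums to `2 Ŵ_e(G)`, and `E_k`, `E_l` both
separate `e` from `f` exactly when `e` lies on side `(i, j)` and `f` on side `(¬i, ¬j)`, giving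
`∑_{i,j} m_{kl}^{ij} m_{kl}^{¬i¬j} = 2 (m_{kl}^{11} m_{kl}^{00} + m_{kl}^{10} m_{kl}^{01})` pairs
`(e, f)` for each ordered pair `(k, l)`. -/

open Finset

namespace Finset

theorem card_sq_eq_card_add_card_offDiag {α : Type*} [DecidableEq α] (s : Finset α) :
    #s ^ 2 = #s + #s.offDiag := by
  have := Nat.le_mul_self #s
  rw [offDiag_card, sq]
  omega

theorem sum_card_offDiag_eq_sum_card_filter {α β : Type*} [Fintype α] [DecidableEq α]
    (S : Finset β) (A : β → Finset α) :
    ∑ b ∈ S, #(A b).offDiag =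
      ∑ p ∈ (univ : Finset α).offDiag, #{b ∈ S | p.1 ∈ A b ∧ p.2 ∈ A b} := by
  have hA : ∀ b, (A b).offDiag =
      univ.offDiag.bipartiteAbove (fun b p => p.1 ∈ A b ∧ p.2 ∈ A b) b := fun b => by
    ext p
    simp only [mem_offDiag, mem_bipartiteAbove, mem_univ, true_and]
    tauto
  simp only [hA]
  exact sum_card_bipartiteAbove_eq_sum_card_bipartiteBelow _

theorem sum_product_self_eq_sum_offDiag {α M : Type*} [DecidableEq α] [AddCommMonoid M]
    {s : Finset α} {f : α × α → M} (hf : ∀ a ∈ s, f (a, a) = 0) :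
    ∑ p ∈ s ×ˢ s, f p = ∑ p ∈ s.offDiag, f p := by
  rw [← diag_union_offDiag, sum_union (disjoint_diag_offDiag s), sum_eq_zero, zero_add]
  rintro ⟨a, b⟩ hab
  obtain ⟨ha, rfl : a = b⟩ := mem_diag.1 hab
  exact hf a ha

theorem sum_offDiag_univ_eq_two_nsmul {α M : Type*} [Fintype α] [LinearOrder α]
    [AddCommMonoid M] {f : α × α → M} (hf : ∀ a b, f (a, b) = f (b, a)) :
    ∑ p ∈ (univ : Finset α).offDiag, f p = 2 • ∑ p : α × α with p.1 < p.2, f p := by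
  have hsplit : (univ : Finset α).offDiag =
      univ.filter (fun p : α × α => p.1 < p.2) ∪ univ.filter (fun p => p.2 < p.1) := by
    ext p
    simp only [mem_offDiag, mem_union, mem_filter, mem_univ, true_and]
    exact ne_iff_lt_or_gt
  have hdisj : Disjoint (univ.filter (fun p : α × α => p.1 < p.2))
      (univ.filter (fun p => p.2 < p.1)) :=
    disjoint_filter.2 fun _ _ h => h.asymm
  rw [hsplit, sum_union hdisj, two_nsmul]
  congr 1
  exact sum_equiv (Equiv.prodComm α α) (by simp) fun p _ => hf p.1 p.2

end Finset

section Hamming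

variable {ι : Type*} [Fintype ι]

theorem hammingDist_eq_one_iff {β : Type*} [DecidableEq β] {p q : ι → β} :
    hammingDist p q = 1 ↔ ∃ k, ∀ i, p i ≠ q i ↔ i = k := by
  simp only [hammingDist, card_eq_one, Finset.ext_iff, mem_filter, mem_univ, true_and,
    mem_singleton]

theorem Bool.eq_of_ne_of_ne {a b c : Bool} (hab : a ≠ b) (hcb : c ≠ b) : a = c :=
  (Bool.eq_not_iff.2 hab).trans (Bool.eq_not_iff.2 hcb).symm

theorem exists_hammingDist_le_card_separating {p q r s : ι → Bool}
    (hpq : hammingDist p q = 1) (hrs : hammingDist r s = 1) :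
    ∃ u w, (u = p ∨ u = q) ∧ (w = r ∨ w = s) ∧
      hammingDist u w ≤ #{k | p k ≠ r k ∧ p k ≠ s k ∧ q k ≠ r k ∧ q k ≠ s k} := by
  obtain ⟨kp, hkp⟩ := hammingDist_eq_one_iff.1 hpq
  obtain ⟨kr, hkr⟩ := hammingDist_eq_one_iff.1 hrs
  -- `u` agrees with `r` at `kp` and `w` agrees with `u` at `kr`, so `u` and `w` differ only
  -- at coordinates where both edges are constant.
  obtain ⟨u, hu, hukp⟩ : ∃ u, (u = p ∨ u = q) ∧ u kp = r kp := by
    by_cases h : p kp = r kp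
    · exact ⟨p, Or.inl rfl, h⟩
    · exact ⟨q, Or.inr rfl, Bool.eq_of_ne_of_ne ((hkp kp).2 rfl).symm (Ne.symm h)⟩
  obtain ⟨w, hw, hwkp, hwkr⟩ : ∃ w, (w = r ∨ w = s) ∧ u kp = w kp ∧ u kr = w kr := by
    by_cases h : u kr = r kr
    · exact ⟨r, Or.inl rfl, hukp, h⟩
    · have hne : kp ≠ kr := fun hk => h (hk ▸ hukp)
      refine ⟨s, Or.inr rfl, hukp.trans (not_not.1 fun h' => hne ((hkr kp).1 h')), ?_⟩
      exact Bool.eq_of_ne_of_ne h ((hkr kr).2 rfl).symm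
  refine ⟨u, w, hu, hw, card_le_card fun k hk => ?_⟩
  simp only [mem_filter, mem_univ, true_and] at hk ⊢
  grind

theorem min_hammingDist_eq_card_separating {p q r s : ι → Bool}
    (hpq : hammingDist p q = 1) (hrs : hammingDist r s = 1) :
    min (min (hammingDist p r) (hammingDist p s)) (min (hammingDist q r) (hammingDist q s)) =
      #{k | p k ≠ r k ∧ p k ≠ s k ∧ q k ≠ r k ∧ q k ≠ s k} := by
  have hle : ∀ u w, (u = p ∨ u = q) → (w = r ∨ w = s) →
      #{k | p k ≠ r k ∧ p k ≠ s k ∧ q k ≠ r k ∧ q k ≠ s k} ≤ hammingDist u w := by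
    rintro u w hu hw
    refine card_le_card fun k hk => ?_
    simp only [mem_filter, mem_univ, true_and] at hk ⊢
    rcases hu with rfl | rfl <;> rcases hw with rfl | rfl <;> tauto
  obtain ⟨u, w, hu, hw, huw⟩ := exists_hammingDist_le_card_separating hpq hrs
  refine le_antisymm ?_ ?_
  · refine le_trans ?_ huw
    rcases hu with rfl | rfl <;> rcases hw with rfl | rfl <;> simp
  · simp only [le_min_iff]
    exact ⟨⟨hle _ _ (.inl rfl) (.inl rfl), hle _ _ (.inl rfl) (.inr rfl)⟩,
      hle _ _ (.inr rfl) (.inl rfl), hle _ _ (.inr rfl) (.inr rfl)⟩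

end Hamming

section PartialCube

variable {V ι : Type*} [Fintype ι]

/-- The coordinates `k` whose Θ-class `E_k` has `e` and `f` on opposite sides. -/
noncomputable def separatingCoords (φ : V → ι → Bool) (e f : Sym2 V) : Finset ι :=
  {k | ∀ v ∈ e, ∀ w ∈ f, φ v k ≠ φ w k}

theorem mem_separatingCoords_mk {φ : V → ι → Bool} {a b x y : V} {k : ι} :
    k ∈ separatingCoords φ s(a, b) s(x, y) ↔
      φ a k ≠ φ x k ∧ φ a k ≠ φ y k ∧ φ b k ≠ φ x k ∧ φ b k ≠ φ y k := by
  simp only [separatingCoords, mem_filter, mem_univ, true_and, Sym2.forall_mem_pair]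
  tauto

theorem edgeDhat_eq_card_separatingCoords {G : SimpleGraph V} {φ : V → ι → Bool}
    (hφ : ∀ u v, G.dist u v = hammingDist (φ u) (φ v)) {e f : Sym2 V}
    (he : e ∈ G.edgeSet) (hf : f ∈ G.edgeSet) :
    edgeDhat G e f = #(separatingCoords φ e f) := by
  induction e, f using Sym2.inductionOn₂ with
  | _ a b x y =>
  have hab : hammingDist (φ a) (φ b) = 1 := by rw [← hφ]; exact G.dist_eq_one_iff_adj.2 he
  have hxy : hammingDist (φ x) (φ y) = 1 := by rw [← hφ]; exact G.dist_eq_one_iff_adj.2 hf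
  simp only [edgeDhat, Sym2.lift₂_mk, hφ]
  rw [min_hammingDist_eq_card_separating hab hxy]
  congr 1
  ext k
  simp only [mem_filter, mem_univ, true_and, mem_separatingCoords_mk]

theorem mem_separatingCoords_iff_exists {φ : V → ι → Bool} {e f : Sym2 V} {k : ι} :
    k ∈ separatingCoords φ e f ↔ ∃ i, (∀ v ∈ e, φ v k = i) ∧ ∀ w ∈ f, φ w k = !i := by
  induction e, f using Sym2.inductionOn₂ with
  | _ a b x y =>
  simp only [mem_separatingCoords_mk, Sym2.forall_mem_pair]
  generalize φ a k = pa, φ b k = pb, φ x k = px, φ y k = py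
  revert pa pb px py
  decide

theorem mem_separatingCoords_both_iff {φ : V → ι → Bool} {e f : Sym2 V} {k l : ι} :
    k ∈ separatingCoords φ e f ∧ l ∈ separatingCoords φ e f ↔
      ∃ c : Bool × Bool, (∀ v ∈ e, φ v k = c.1 ∧ φ v l = c.2) ∧
        ∀ w ∈ f, φ w k = !c.1 ∧ φ w l = !c.2 := by
  simp only [mem_separatingCoords_iff_exists, Prod.exists, forall_and]
  constructor
  · rintro ⟨⟨i, hek, hfk⟩, j, hel, hfl⟩
    exact ⟨i, j, ⟨hek, hel⟩, hfk, hfl⟩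
  · rintro ⟨i, j, ⟨hek, hel⟩, hfk, hfl⟩
    exact ⟨⟨i, hek, hfk⟩, j, hel, hfl⟩

theorem edgeDhat_self (G : SimpleGraph V) (e : Sym2 V) : edgeDhat G e e = 0 := by
  induction e using Sym2.inductionOn with
  | hf a b => simp [edgeDhat]

end PartialCube

section EdgeDistances

variable {V : Type*} [Fintype V] {n : ℕ} {G : SimpleGraph V}

theorem card_filter_mem_separatingCoords_both (φ : V → Fin n → Bool) (k l : Fin n) :
    #{q ∈ edgeFS G ×ˢ edgeFS G |
        k ∈ separatingCoords φ q.1 q.2 ∧ l ∈ separatingCoords φ q.1 q.2} =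
      ∑ c : Bool × Bool, mSide G φ k l c.1 c.2 * mSide G φ k l (!c.1) (!c.2) := by
  set side : Bool × Bool → Finset (Sym2 V) :=
    fun c => {e ∈ edgeFS G | ∀ v ∈ e, φ v k = c.1 ∧ φ v l = c.2}
  have hside : (univ : Finset (Bool × Bool)).biUnion (fun c => side c ×ˢ side (!c.1, !c.2)) =
      {q ∈ edgeFS G ×ˢ edgeFS G |
        k ∈ separatingCoords φ q.1 q.2 ∧ l ∈ separatingCoords φ q.1 q.2} := by
    ext q
    simp only [side, mem_separatingCoords_both_iff, mem_biUnion, mem_univ, true_and, mem_product,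
      mem_filter]
    tauto
  have hdisj : ((univ : Finset (Bool × Bool)) : Set (Bool × Bool)).PairwiseDisjoint
      (fun c => side c ×ˢ side (!c.1, !c.2)) := by
    intro c _ c' _ hcc'
    refine disjoint_product.2 (.inl (disjoint_left.2 fun e he he' => hcc' ?_))
    obtain ⟨-, h⟩ := mem_filter.1 he
    obtain ⟨-, h'⟩ := mem_filter.1 he'
    have hv := h _ e.out_fst_mem
    have hv' := h' _ e.out_fst_mem
    exact Prod.ext (hv.1.symm.trans hv'.1) (hv.2.symm.trans hv'.2)
  rw [← hside, card_biUnion hdisj]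
  simp only [card_product, mSide, side]

theorem mem_edgeFS {e : Sym2 V} : e ∈ edgeFS G ↔ e ∈ G.edgeSet := Set.Finite.mem_toFinset _

theorem sum_edgeDhat_eq_two_mul_hatEdgeWiener :
    ∑ q ∈ edgeFS G ×ˢ edgeFS G, (edgeDhat G q.1 q.2 : ℚ) = 2 * hatEdgeWiener G := by
  rw [sum_product_self_eq_sum_offDiag fun e _ => by simp [edgeDhat_self], hatEdgeWiener]
  ring

theorem sum_edgeDhat_sq_eq_sum_edgeDhat_add {φ : V → Fin n → Bool}
    (hφ : ∀ u v, G.dist u v = hammingDist (φ u) (φ v)) :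
    ∑ q ∈ edgeFS G ×ˢ edgeFS G, edgeDhat G q.1 q.2 ^ 2 =
      ∑ q ∈ edgeFS G ×ˢ edgeFS G, edgeDhat G q.1 q.2 +
        4 * ∑ p : Fin n × Fin n with p.1 < p.2,
          (mSide G φ p.1 p.2 true true * mSide G φ p.1 p.2 false false +
            mSide G φ p.1 p.2 true false * mSide G φ p.1 p.2 false true) := by
  set D : Sym2 V × Sym2 V → Finset (Fin n) := fun q => separatingCoords φ q.1 q.2
  have hD : ∀ q ∈ edgeFS G ×ˢ edgeFS G, edgeDhat G q.1 q.2 = #(D q) := fun q hq =>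
    edgeDhat_eq_card_separatingCoords hφ (mem_edgeFS.1 (mem_product.1 hq).1)
      (mem_edgeFS.1 (mem_product.1 hq).2)
  have hpairs : ∀ p : Fin n × Fin n, #{q ∈ edgeFS G ×ˢ edgeFS G | p.1 ∈ D q ∧ p.2 ∈ D q} =
      2 * (mSide G φ p.1 p.2 true true * mSide G φ p.1 p.2 false false +
        mSide G φ p.1 p.2 true false * mSide G φ p.1 p.2 false true) := fun p => by
    rw [card_filter_mem_separatingCoords_both, Fintype.sum_prod_type, Fintype.sum_bool,
      Fintype.sum_bool, Fintype.sum_bool]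
    simp only [Bool.not_true, Bool.not_false]
    ring
  calc ∑ q ∈ edgeFS G ×ˢ edgeFS G, edgeDhat G q.1 q.2 ^ 2
      = ∑ q ∈ edgeFS G ×ˢ edgeFS G, (#(D q) + #(D q).offDiag) :=
        sum_congr rfl fun q hq => by rw [hD q hq, card_sq_eq_card_add_card_offDiag]
    _ = ∑ q ∈ edgeFS G ×ˢ edgeFS G, edgeDhat G q.1 q.2 +
          ∑ p ∈ (univ : Finset (Fin n)).offDiag,
            #{q ∈ edgeFS G ×ˢ edgeFS G | p.1 ∈ D q ∧ p.2 ∈ D q} := by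
        rw [sum_add_distrib, sum_card_offDiag_eq_sum_card_filter, sum_congr rfl hD]
    _ = _ := by
        rw [sum_offDiag_univ_eq_two_nsmul fun k l => by simp only [and_comm], smul_eq_mul,
          sum_congr rfl fun p _ => hpairs p, ← mul_sum]
        ring

end EdgeDistances

theorem sum_edgeDhat_sq_general {V : Type*} [Fintype V] (n : ℕ) (G : SimpleGraph V)
    (φ : V → Fin n → Bool)
    (hφ : ∀ u v : V, G.dist u v = hammingDist (φ u) (φ v)) :
    (∑ e ∈ edgeFS G, ∑ f ∈ edgeFS G, (edgeDhat G e f : ℚ) ^ 2) =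
      2 * hatEdgeWiener G +
        4 * ∑ p ∈ (Finset.univ : Finset (Fin n × Fin n)).filter (fun p => p.1 < p.2),
            ((mSide G φ p.1 p.2 true true * mSide G φ p.1 p.2 false false : ℕ) +
             (mSide G φ p.1 p.2 true false * mSide G φ p.1 p.2 false true : ℕ) : ℚ) := by
  rw [← sum_product' (f := fun e f => (edgeDhat G e f : ℚ) ^ 2),
    ← sum_edgeDhat_eq_two_mul_hatEdgeWiener]
  exact_mod_cast sum_edgeDhat_sq_eq_sum_edgeDhat_add hφ

/-- For a partial cube `G` (isometrically embedded in `{0,1}^n` via `φ`):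
`Σ_{e ∈ E(G)} Σ_{f ∈ E(G)} d̂(e,f)² =
  2·Ŵ_e(G) + 4·Σ_{1 ≤ k < l ≤ n} (m_{kl}^{11}·m_{kl}^{00} + m_{kl}^{10}·m_{kl}^{01})`. -/
theorem sum_edgeDhat_sq {V : Type*} [Fintype V] (n : ℕ) (G : SimpleGraph V)
    (hG : G.Connected) (φ : V → Fin n → Bool)
    (hφ : ∀ u v : V, G.dist u v = hammingDist (φ u) (φ v)) :
    (∑ e ∈ edgeFS G, ∑ f ∈ edgeFS G, (edgeDhat G e f : ℚ) ^ 2) =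
      2 * hatEdgeWiener G +
        4 * ∑ p ∈ (Finset.univ : Finset (Fin n × Fin n)).filter (fun p => p.1 < p.2),
            ((mSide G φ p.1 p.2 true true * mSide G φ p.1 p.2 false false : ℕ) +
             (mSide G φ p.1 p.2 true false * mSide G φ p.1 p.2 false true : ℕ) : ℚ) :=
  sum_edgeDhat_sq_general n G φ hφ
end

section
/- Let G be a finite connected simple graph with m edges admitting an isometric embedding φ : V(G) → {0,1}^n with d_G(u,v) equal to the Hamming distance of φ(u), φ(v) for all u, v. For coordinates k ≠ l and values i, j ∈ {0,1}, let m_{kl}^{ij} be the number of edges e = ab of G with φ(a)_k = φ(b)_k = i and φ(a)_l = φ(b)_l = j. Then WW_e(G) = 2·W_e(G) + Σ_{1 ≤ k < l ≤ n} ( m_{kl}^{11}·m_{kl}^{00} + m_{kl}^{10}·m_{kl}^{01} ) − C(m,2), where C(m,2) = m(m−1)/2. -/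
open scoped Classical

/-- The edge-Wiener index `W_e(G) = Σ_{{e,f} ⊆ E(G)} d(e,f)` where, for distinct edges,
`d(e,f) = d̂(e,f) + 1` is the distance in the line graph; the sum over unordered pairs of
distinct edges is computed as half of the sum over ordered pairs of distinct edges. -/
noncomputable def edgeWiener {V : Type*} [Fintype V] (G : SimpleGraph V) : ℚ :=
  (∑ p ∈ (edgeFS G).offDiag, ((edgeDhat G p.1 p.2 : ℚ) + 1)) / 2

/-- The edge-hyper-Wiener index
`WW_e(G) = ½·Σ_{{e,f} ⊆ E(G)} d(e,f) + ½·Σ_{{e,f} ⊆ E(G)} d(e,f)²`, sums over unordered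
pairs of distinct edges (computed as halves of the corresponding ordered sums). -/
noncomputable def edgeHyperWiener {V : Type*} [Fintype V] (G : SimpleGraph V) : ℚ :=
  (∑ p ∈ (edgeFS G).offDiag, ((edgeDhat G p.1 p.2 : ℚ) + 1)) / 4 +
    (∑ p ∈ (edgeFS G).offDiag, ((edgeDhat G p.1 p.2 : ℚ) + 1) ^ 2) / 4

lemma bool_resolve {p q r : Bool} (h1 : p ≠ q) (h2 : p ≠ r) : q = r := by
  cases p <;> cases q <;> cases r <;> simp_all

lemma dhat_eq_card {V : Type*} {n : ℕ} (G : SimpleGraph V)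
    (φ : V → Fin n → Bool)
    (hφ : ∀ u v : V, G.dist u v = hammingDist (φ u) (φ v))
    {a b x y : V} (hab : G.Adj a b) (hxy : G.Adj x y) :
    edgeDhat G s(a,b) s(x,y) =
      (Finset.univ.filter (fun k : Fin n =>
        φ a k = φ b k ∧ φ x k = φ y k ∧ φ a k ≠ φ x k)).card := by
  classical
  set P := Finset.univ.filter (fun k : Fin n =>
        φ a k = φ b k ∧ φ x k = φ y k ∧ φ a k ≠ φ x k) with hPdef
  have hab1 : hammingDist (φ a) (φ b) = 1 := by
    rw [← hφ]; exact SimpleGraph.dist_eq_one_iff_adj.2 hab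
  have hxy1 : hammingDist (φ x) (φ y) = 1 := by
    rw [← hφ]; exact SimpleGraph.dist_eq_one_iff_adj.2 hxy
  obtain ⟨ke, hke⟩ := Finset.card_eq_one.1 hab1
  obtain ⟨kf, hkf⟩ := Finset.card_eq_one.1 hxy1
  have hke' : ∀ k, φ a k ≠ φ b k ↔ k = ke := by
    intro k; have := Finset.ext_iff.1 hke k; simpa using this
  have hkf' : ∀ k, φ x k ≠ φ y k ↔ k = kf := by
    intro k; have := Finset.ext_iff.1 hkf k; simpa using this
  have lower : ∀ u w : V, (u = a ∨ u = b) → (w = x ∨ w = y) →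
      P.card ≤ hammingDist (φ u) (φ w) := by
    rintro u w hu hw
    apply Finset.card_le_card
    intro k hk
    rw [hPdef, Finset.mem_filter] at hk
    obtain ⟨-, h1, h2, h3⟩ := hk
    simp only [hammingDist, Finset.mem_filter, Finset.mem_univ, true_and]
    rcases hu with rfl | rfl <;> rcases hw with rfl | rfl <;> simp_all
  have upper : ∃ u w : V, (u = a ∨ u = b) ∧ (w = x ∨ w = y) ∧
      hammingDist (φ u) (φ w) ≤ P.card := by
    by_cases hcase : ke = kf
    · subst hcase
      set w := if φ x ke = φ a ke then x else y with hw
      have hwke : φ w ke = φ a ke := by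
        rw [hw]; split
        · assumption
        · exact bool_resolve ((hkf' ke).2 rfl) (by assumption)
      have hwk : ∀ k, k ≠ ke → φ w k = φ x k := by
        intro k hk
        rw [hw]; split
        · rfl
        · exact (not_not.1 ((not_iff_not.2 (hkf' k)).2 hk)).symm
      refine ⟨a, w, Or.inl rfl, by rw [hw]; split <;> simp, ?_⟩
      apply Finset.card_le_card
      intro k hk
      simp only [hammingDist, Finset.mem_filter, Finset.mem_univ, true_and] at hk
      have hkne : k ≠ ke := fun h => hk (h ▸ hwke.symm)
      rw [hPdef, Finset.mem_filter]
      refine ⟨Finset.mem_univ _, not_not.1 ((not_iff_not.2 (hke' k)).2 hkne), not_not.1 ((not_iff_not.2 (hkf' k)).2 hkne), ?_⟩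
      rw [← hwk k hkne]; exact hk
    · set u := if φ a ke = φ x ke then a else b with hu
      have huke : φ u ke = φ x ke := by
        rw [hu]; split
        · assumption
        · exact bool_resolve ((hke' ke).2 rfl) (by assumption)
      have huk : ∀ k, k ≠ ke → φ u k = φ a k := by
        intro k hk
        rw [hu]; split
        · rfl
        · exact (not_not.1 ((not_iff_not.2 (hke' k)).2 hk)).symm
      set w := if φ x kf = φ u kf then x else y with hw
      have hwkf : φ w kf = φ u kf := by
        rw [hw]; split
        · assumption
        · exact bool_resolve ((hkf' kf).2 rfl) (by assumption)
      have hwk : ∀ k, k ≠ kf → φ w k = φ x k := by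
        intro k hk
        rw [hw]; split
        · rfl
        · exact (not_not.1 ((not_iff_not.2 (hkf' k)).2 hk)).symm
      refine ⟨u, w, by rw [hu]; split <;> simp, by rw [hw]; split <;> simp, ?_⟩
      apply Finset.card_le_card
      intro k hk
      simp only [hammingDist, Finset.mem_filter, Finset.mem_univ, true_and] at hk
      have hkne : k ≠ ke := by
        rintro rfl
        exact hk (huke.trans (hwk _ hcase).symm)
      have hknf : k ≠ kf := fun h => hk (h ▸ hwkf.symm ▸ rfl)
      rw [hPdef, Finset.mem_filter]
      refine ⟨Finset.mem_univ _, not_not.1 ((not_iff_not.2 (hke' k)).2 hkne), not_not.1 ((not_iff_not.2 (hkf' k)).2 hknf), ?_⟩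
      rw [← huk k hkne, ← hwk k hknf]; exact hk
  obtain ⟨u, w, hu, hw, hle⟩ := upper
  have l1 := lower a x (Or.inl rfl) (Or.inl rfl)
  have l2 := lower a y (Or.inl rfl) (Or.inr rfl)
  have l3 := lower b x (Or.inr rfl) (Or.inl rfl)
  have l4 := lower b y (Or.inr rfl) (Or.inr rfl)
  have hD : edgeDhat G s(a,b) s(x,y) =
      min (min (hammingDist (φ a) (φ x)) (hammingDist (φ a) (φ y)))
        (min (hammingDist (φ b) (φ x)) (hammingDist (φ b) (φ y))) := by
    simp [edgeDhat, hφ]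
  rw [hD]
  rcases hu with rfl | rfl <;> rcases hw with rfl | rfl <;> omega

section Count
variable {V : Type*} [Fintype V] {n : ℕ}

/-- edges of `edgeFS` have adjacent representatives -/
lemma edgeFS_rep {G : SimpleGraph V} {e : Sym2 V} (he : e ∈ edgeFS G) :
    ∃ a b : V, G.Adj a b ∧ e = s(a, b) := by
  induction e using Sym2.inductionOn with
  | hf a b => exact ⟨a, b, by simpa [edgeFS] using he, rfl⟩

noncomputable def Mset (G : SimpleGraph V) (φ : V → Fin n → Bool) (k l : Fin n)
    (i j : Bool) : Finset (Sym2 V) :=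
  (edgeFS G).filter (fun e => ∀ v ∈ e, φ v k = i ∧ φ v l = j)

noncomputable def Scoords (φ : V → Fin n → Bool) (e f : Sym2 V) : Finset (Fin n) :=
  Finset.univ.filter (fun k => ∃ i : Bool, (∀ v ∈ e, φ v k = i) ∧ (∀ v ∈ f, φ v k = !i))

lemma Scoords_eq (φ : V → Fin n → Bool) (a b x y : V) :
    Scoords φ s(a,b) s(x,y) =
      Finset.univ.filter (fun k : Fin n =>
        φ a k = φ b k ∧ φ x k = φ y k ∧ φ a k ≠ φ x k) := by
  ext k
  simp only [Scoords, Finset.mem_filter, Finset.mem_univ, true_and, Sym2.mem_iff,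
    forall_eq_or_imp, forall_eq]
  generalize φ a k = A; generalize φ b k = B; generalize φ x k = X; generalize φ y k = Y
  revert A B X Y; decide

/-- pointwise decomposition -/
lemma point_decomp (G : SimpleGraph V) (φ : V → Fin n → Bool) {e f : Sym2 V}
    (he : e ∈ edgeFS G) (hf : f ∈ edgeFS G) (k l : Fin n) :
    (if (k ∈ Scoords φ e f ∧ l ∈ Scoords φ e f) then (1:ℕ) else 0) =
      ∑ ij : Bool × Bool,
        (if (e ∈ Mset G φ k l ij.1 ij.2 ∧ f ∈ Mset G φ k l (!ij.1) (!ij.2)) then (1:ℕ) else 0) := by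
  obtain ⟨a, b, hab, rfl⟩ := edgeFS_rep he
  obtain ⟨x, y, hxy, rfl⟩ := edgeFS_rep hf
  simp only [Scoords, Mset, Finset.mem_filter, Finset.mem_univ, true_and, Sym2.mem_iff,
    forall_eq_or_imp, forall_eq, he, hf, Fintype.sum_prod_type, Fintype.sum_bool]
  generalize φ a k = A1; generalize φ a l = A2
  generalize φ b k = B1; generalize φ b l = B2
  generalize φ x k = X1; generalize φ x l = X2
  generalize φ y k = Y1; generalize φ y l = Y2
  revert A1 A2 B1 B2 X1 X2 Y1 Y2; decide

lemma scoords_self (G : SimpleGraph V) (φ : V → Fin n → Bool) {e : Sym2 V}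
    (he : e ∈ edgeFS G) (k : Fin n) : k ∉ Scoords φ e e := by
  obtain ⟨a, b, hab, rfl⟩ := edgeFS_rep he
  simp only [Scoords, Finset.mem_filter, Finset.mem_univ, true_and, Sym2.mem_iff,
    forall_eq_or_imp, forall_eq]
  rintro ⟨i, ⟨h1, -⟩, ⟨h2, -⟩⟩
  rw [h1] at h2
  simp at h2

lemma inner_count (G : SimpleGraph V) (φ : V → Fin n → Bool) (k l : Fin n) :
    ∑ p ∈ (edgeFS G).offDiag,
        (if (k ∈ Scoords φ p.1 p.2 ∧ l ∈ Scoords φ p.1 p.2) then (1:ℕ) else 0) =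
      ∑ ij : Bool × Bool, mSide G φ k l ij.1 ij.2 * mSide G φ k l (!ij.1) (!ij.2) := by
  classical
  have hE : ∑ p ∈ (edgeFS G) ×ˢ (edgeFS G),
      (if (k ∈ Scoords φ p.1 p.2 ∧ l ∈ Scoords φ p.1 p.2) then (1:ℕ) else 0) =
      ∑ p ∈ (edgeFS G).offDiag,
      (if (k ∈ Scoords φ p.1 p.2 ∧ l ∈ Scoords φ p.1 p.2) then (1:ℕ) else 0) := by
    rw [← Finset.diag_union_offDiag (edgeFS G),
      Finset.sum_union (Finset.disjoint_diag_offDiag _)]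
    have hz : ∑ p ∈ (edgeFS G).diag,
        (if (k ∈ Scoords φ p.1 p.2 ∧ l ∈ Scoords φ p.1 p.2) then (1:ℕ) else 0) = 0 := by
      apply Finset.sum_eq_zero
      rintro ⟨e, f⟩ hp
      rw [Finset.mem_diag] at hp
      obtain ⟨h1, h2⟩ := hp
      dsimp only at h2 ⊢
      subst h2
      rw [if_neg]
      rintro ⟨hk, -⟩
      exact scoords_self G φ h1 k hk
    rw [hz, zero_add]
  rw [← hE]
  calc ∑ p ∈ (edgeFS G) ×ˢ (edgeFS G),
      (if (k ∈ Scoords φ p.1 p.2 ∧ l ∈ Scoords φ p.1 p.2) then (1:ℕ) else 0)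
      = ∑ p ∈ (edgeFS G) ×ˢ (edgeFS G), ∑ ij : Bool × Bool,
        (if (p.1 ∈ Mset G φ k l ij.1 ij.2 ∧ p.2 ∈ Mset G φ k l (!ij.1) (!ij.2))
          then (1:ℕ) else 0) := by
        refine Finset.sum_congr rfl fun p hp => ?_
        rw [Finset.mem_product] at hp
        exact point_decomp G φ hp.1 hp.2 k l
    _ = ∑ ij : Bool × Bool, ∑ p ∈ (edgeFS G) ×ˢ (edgeFS G),
        (if (p.1 ∈ Mset G φ k l ij.1 ij.2 ∧ p.2 ∈ Mset G φ k l (!ij.1) (!ij.2))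
          then (1:ℕ) else 0) := Finset.sum_comm
    _ = ∑ ij : Bool × Bool, mSide G φ k l ij.1 ij.2 * mSide G φ k l (!ij.1) (!ij.2) := by
        refine Finset.sum_congr rfl fun ij _ => ?_
        rw [Finset.sum_product]
        have step : ∀ e f : Sym2 V,
            (if (e ∈ Mset G φ k l ij.1 ij.2 ∧ f ∈ Mset G φ k l (!ij.1) (!ij.2))
              then (1:ℕ) else 0)
            = (if e ∈ Mset G φ k l ij.1 ij.2 then (1:ℕ) else 0) *
              (if f ∈ Mset G φ k l (!ij.1) (!ij.2) then (1:ℕ) else 0) := by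
          intro e f
          by_cases h1 : e ∈ Mset G φ k l ij.1 ij.2 <;>
            by_cases h2 : f ∈ Mset G φ k l (!ij.1) (!ij.2) <;> simp [h1, h2]
        simp_rw [step]
        rw [← Finset.sum_mul_sum]
        have count : ∀ i j : Bool,
            ∑ e ∈ edgeFS G, (if e ∈ Mset G φ k l i j then (1:ℕ) else 0)
            = mSide G φ k l i j := by
          intro i j
          rw [Finset.sum_ite_mem]
          have hsub : edgeFS G ∩ Mset G φ k l i j = Mset G φ k l i j :=
            Finset.inter_eq_right.2 (Finset.filter_subset _ _)
          rw [hsub]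
          simp [mSide, Mset]
        rw [count, count]

lemma mSide_symm (G : SimpleGraph V) (φ : V → Fin n → Bool) (k l : Fin n) (i j : Bool) :
    mSide G φ k l i j = mSide G φ l k j i := by
  unfold mSide
  congr 1
  apply Finset.filter_congr
  intro e _
  constructor <;> intro h v hv <;> exact ⟨(h v hv).2, (h v hv).1⟩

lemma sum_bool_pairs (m : Bool → Bool → ℕ) :
    ∑ ij : Bool × Bool, m ij.1 ij.2 * m (!ij.1) (!ij.2) =
      2 * (m true true * m false false + m true false * m false true) := by
  simp [Fintype.sum_prod_type, Fintype.sum_bool]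
  ring

lemma total_count (G : SimpleGraph V) (φ : V → Fin n → Bool) :
    ∑ p ∈ (edgeFS G).offDiag,
        ((Scoords φ p.1 p.2).card * (Scoords φ p.1 p.2).card - (Scoords φ p.1 p.2).card)
      = 4 * ∑ q ∈ (Finset.univ : Finset (Fin n × Fin n)).filter (fun q => q.1 < q.2),
          (mSide G φ q.1 q.2 true true * mSide G φ q.1 q.2 false false +
           mSide G φ q.1 q.2 true false * mSide G φ q.1 q.2 false true) := by
  classical
  have step1 : ∀ p : Sym2 V × Sym2 V,
      (Scoords φ p.1 p.2).card * (Scoords φ p.1 p.2).card - (Scoords φ p.1 p.2).card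
        = ((Scoords φ p.1 p.2).offDiag).card := fun p => (Finset.offDiag_card _).symm
  simp_rw [step1]
  have step2 : ∀ p : Sym2 V × Sym2 V,
      ((Scoords φ p.1 p.2).offDiag).card =
        ∑ q ∈ (Finset.univ : Finset (Fin n)).offDiag,
          (if (q.1 ∈ Scoords φ p.1 p.2 ∧ q.2 ∈ Scoords φ p.1 p.2) then (1:ℕ) else 0) := by
    intro p
    rw [← Finset.card_filter]
    congr 1
    ext q
    simp only [Finset.mem_offDiag, Finset.mem_filter, Finset.mem_univ, true_and]
    constructor
    · rintro ⟨h1, h2, h3⟩; exact ⟨h3, h1, h2⟩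
    · rintro ⟨h3, h1, h2⟩; exact ⟨h1, h2, h3⟩
  simp_rw [step2]
  rw [Finset.sum_comm]
  have step3 : ∀ q : Fin n × Fin n,
      ∑ p ∈ (edgeFS G).offDiag,
        (if (q.1 ∈ Scoords φ p.1 p.2 ∧ q.2 ∈ Scoords φ p.1 p.2) then (1:ℕ) else 0)
      = 2 * (mSide G φ q.1 q.2 true true * mSide G φ q.1 q.2 false false +
           mSide G φ q.1 q.2 true false * mSide G φ q.1 q.2 false true) := by
    intro q
    rw [inner_count G φ q.1 q.2, sum_bool_pairs (mSide G φ q.1 q.2)]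
  simp_rw [step3]
  -- split offDiag into < and >
  have hsplit : (Finset.univ : Finset (Fin n)).offDiag =
      ((Finset.univ : Finset (Fin n × Fin n)).filter (fun q => q.1 < q.2)) ∪
      ((Finset.univ : Finset (Fin n × Fin n)).filter (fun q => q.2 < q.1)) := by
    ext q
    simp only [Finset.mem_offDiag, Finset.mem_union, Finset.mem_filter, Finset.mem_univ,
      true_and]
    omega
  rw [hsplit, Finset.sum_union (by
    rw [Finset.disjoint_filter]
    intro q _ h1 h2
    exact absurd h2 (not_lt_of_gt h1))]
  have hswap : ∑ q ∈ ((Finset.univ : Finset (Fin n × Fin n)).filter (fun q => q.2 < q.1)),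
      2 * (mSide G φ q.1 q.2 true true * mSide G φ q.1 q.2 false false +
           mSide G φ q.1 q.2 true false * mSide G φ q.1 q.2 false true)
      = ∑ q ∈ ((Finset.univ : Finset (Fin n × Fin n)).filter (fun q => q.1 < q.2)),
      2 * (mSide G φ q.1 q.2 true true * mSide G φ q.1 q.2 false false +
           mSide G φ q.1 q.2 true false * mSide G φ q.1 q.2 false true) := by
    refine Finset.sum_nbij' (fun q => Prod.swap q) (fun q => Prod.swap q) ?_ ?_ ?_ ?_ ?_
    · intro q hq; simp only [Finset.mem_filter, Finset.mem_univ, true_and] at hq ⊢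
      simpa using hq
    · intro q hq; simp only [Finset.mem_filter, Finset.mem_univ, true_and] at hq ⊢
      simpa using hq
    · intro q _; simp
    · intro q _; simp
    · intro q _
      simp only [Prod.fst_swap, Prod.snd_swap]
      rw [mSide_symm G φ q.2 q.1 true true, mSide_symm G φ q.2 q.1 false false,
        mSide_symm G φ q.2 q.1 true false, mSide_symm G φ q.2 q.1 false true]
      ring
  rw [hswap, ← two_mul, Finset.mul_sum, Finset.mul_sum]
  exact Finset.sum_congr rfl fun q _ => by ring

end Count

/-- **Main Theorem.** For a partial cube `G` with `m` edges
(isometrically embedded in `{0,1}^n` via `φ`):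
`WW_e(G) = 2·W_e(G) + Σ_{1 ≤ k < l ≤ n} (m_{kl}^{11}·m_{kl}^{00} + m_{kl}^{10}·m_{kl}^{01})
  − m(m−1)/2`. -/
theorem edgeHyperWiener_partialCube {V : Type*} [Fintype V] (n : ℕ) (G : SimpleGraph V)
    (hG : G.Connected) (φ : V → Fin n → Bool)
    (hφ : ∀ u v : V, G.dist u v = hammingDist (φ u) (φ v))
    (m : ℕ) (hm : m = (edgeFS G).card) :
    edgeHyperWiener G =
      2 * edgeWiener G +
        (∑ p ∈ (Finset.univ : Finset (Fin n × Fin n)).filter (fun p => p.1 < p.2),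
            ((mSide G φ p.1 p.2 true true * mSide G φ p.1 p.2 false false : ℕ) +
             (mSide G φ p.1 p.2 true false * mSide G φ p.1 p.2 false true : ℕ) : ℚ)) -
        (m : ℚ) * ((m : ℚ) - 1) / 2 := by
  classical
  have hd : ∀ p ∈ (edgeFS G).offDiag, edgeDhat G p.1 p.2 = (Scoords φ p.1 p.2).card := by
    intro p hp
    rw [Finset.mem_offDiag] at hp
    obtain ⟨a, b, hab, h1⟩ := edgeFS_rep hp.1
    obtain ⟨x, y, hxy, h2⟩ := edgeFS_rep hp.2.1
    rw [h1, h2, dhat_eq_card G φ hφ hab hxy, Scoords_eq]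
  set E := (edgeFS G).offDiag with hE
  set S1 := ∑ p ∈ E, ((edgeDhat G p.1 p.2 : ℚ) + 1) with hS1
  set S2 := ∑ p ∈ E, ((edgeDhat G p.1 p.2 : ℚ) + 1) ^ 2 with hS2
  have hmm : m ≤ m * m := by nlinarith
  have hcard : (E.card : ℚ) = (m : ℚ) * ((m : ℚ) - 1) := by
    rw [hE, Finset.offDiag_card, ← hm, Nat.cast_sub hmm]
    push_cast
    ring
  set T : ℕ := ∑ q ∈ (Finset.univ : Finset (Fin n × Fin n)).filter (fun q => q.1 < q.2),
          (mSide G φ q.1 q.2 true true * mSide G φ q.1 q.2 false false +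
           mSide G φ q.1 q.2 true false * mSide G φ q.1 q.2 false true) with hT
  have key : ∑ p ∈ E, (((edgeDhat G p.1 p.2 : ℚ) + 1) ^ 2
        - 3 * ((edgeDhat G p.1 p.2 : ℚ) + 1) + 2)
      = ((4 * T : ℕ) : ℚ) := by
    rw [hT, ← total_count G φ, Nat.cast_sum]
    refine Finset.sum_congr rfl fun p hp => ?_
    rw [hd p hp]
    have hle : (Scoords φ p.1 p.2).card ≤ (Scoords φ p.1 p.2).card * (Scoords φ p.1 p.2).card := by
      nlinarith
    rw [Nat.cast_sub hle]
    push_cast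
    ring
  have expand : ∑ p ∈ E, (((edgeDhat G p.1 p.2 : ℚ) + 1) ^ 2
        - 3 * ((edgeDhat G p.1 p.2 : ℚ) + 1) + 2)
      = S2 - 3 * S1 + 2 * (E.card : ℚ) := by
    rw [Finset.sum_add_distrib, Finset.sum_sub_distrib, ← Finset.mul_sum, Finset.sum_const,
      nsmul_eq_mul, ← hS1, ← hS2]
    ring
  have hS : S2 - 3 * S1 + 2 * (E.card : ℚ) = 4 * (T : ℚ) := by
    rw [← expand, key]; push_cast; ring
  have hTcast : (∑ p ∈ (Finset.univ : Finset (Fin n × Fin n)).filter (fun p => p.1 < p.2),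
            ((mSide G φ p.1 p.2 true true * mSide G φ p.1 p.2 false false : ℕ) +
             (mSide G φ p.1 p.2 true false * mSide G φ p.1 p.2 false true : ℕ) : ℚ))
      = (T : ℚ) := by
    rw [hT, Nat.cast_sum]
    refine Finset.sum_congr rfl fun q _ => ?_
    push_cast
    ring
  rw [edgeHyperWiener, edgeWiener, hTcast, ← hE, ← hS1, ← hS2]
  have hc2 : (m : ℚ) * ((m : ℚ) - 1) / 2 = (E.card : ℚ) / 2 := by rw [hcard]
  rw [hc2]
  linarith [hS]
end

section
/- Let T be a finite tree with m ≥ 1 edges. For distinct edges e and f of T, let m₁(e,f) be the number of edges of T lying in the connected component of T − e that does not contain f, and let m₂(e,f) be the number of edges of T lying in the connected component of T − f that does not contain e. Then WW_e(T) = 2·W_e(T) + Σ_{{e,f} ⊆ E(T)} m₁(e,f)·m₂(e,f) − C(m,2), where the sum runs over unordered pairs of distinct edges and C(m,2) = m(m−1)/2. -/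
open scoped Classical

/-- `m₁(e,f)`: the number of edges of `T` lying in the connected component of `T − e`
that does not contain the edge `f` (an edge `g` lies in that component iff no endpoint of `g`
is reachable in `T − e` from an endpoint of `f`).  By symmetry,
`m₂(e,f) = extremalEdgeCount T f e`. -/
noncomputable def extremalEdgeCount {V : Type*} [Fintype V] (T : SimpleGraph V)
    (e f : Sym2 V) : ℕ :=
  ((edgeFS T).filter
    (fun g => ∀ u ∈ g, ∀ v ∈ f, ¬ (T.deleteEdges {e}).Reachable u v)).card

namespace EdgeHW

open SimpleGraph

variable {V : Type*} {T : SimpleGraph V}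

/-- `e` separates the edge `g` from the edge `f`. -/
def Sep (T : SimpleGraph V) (e g f : Sym2 V) : Prop :=
  ∀ u ∈ g, ∀ v ∈ f, ¬ (T.deleteEdges {e}).Reachable u v

lemma sym2_rep (e : Sym2 V) : ∃ a b, e = s(a, b) :=
  Sym2.ind (fun a b => ⟨a, b, rfl⟩) e

noncomputable def tpath (hT : T.IsTree) (x y : V) : T.Walk x y :=
  (hT.existsUnique_path x y).choose

lemma tpath_isPath (hT : T.IsTree) (x y : V) : (tpath hT x y).IsPath :=
  (hT.existsUnique_path x y).choose_spec.1

lemma tpath_unique (hT : T.IsTree) {x y : V} (p : T.Walk x y) (hp : p.IsPath) :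
    p = tpath hT x y :=
  (hT.existsUnique_path x y).choose_spec.2 p hp

lemma reach_endpoint (hT : T.IsTree) (a b w : V) :
    (T.deleteEdges {s(a,b)}).Reachable w a ∨ (T.deleteEdges {s(a,b)}).Reachable w b := by
  have key : ∀ {p q : V} (_ : T.Walk p q),
      (T.deleteEdges {s(a,b)}).Reachable p q ∨
      (T.deleteEdges {s(a,b)}).Reachable p a ∨ (T.deleteEdges {s(a,b)}).Reachable p b := by
    intro p q w'
    induction w' with
    | nil => exact Or.inl (Reachable.refl _)
    | @cons p c q hadj tail ih =>
      by_cases hce : s(p, c) = s(a, b)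
      · rcases Sym2.eq_iff.1 hce with ⟨rfl, rfl⟩ | ⟨rfl, rfl⟩
        · exact Or.inr (Or.inl (Reachable.refl _))
        · exact Or.inr (Or.inr (Reachable.refl _))
      · have hpc : (T.deleteEdges {s(a,b)}).Reachable p c :=
          (SimpleGraph.deleteEdges_adj.2 ⟨hadj, by simp [hce]⟩).reachable
        rcases ih with h | h | h
        · exact Or.inl (hpc.trans h)
        · exact Or.inr (Or.inl (hpc.trans h))
        · exact Or.inr (Or.inr (hpc.trans h))
  obtain ⟨w'⟩ := hT.isConnected.preconnected w a
  rcases key w' with h | h | h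
  · exact Or.inl h
  · exact Or.inl h
  · exact Or.inr h

lemma not_reach_iff (hT : T.IsTree) (e : Sym2 V) (x y : V) :
    ¬ (T.deleteEdges {e}).Reachable x y ↔ e ∈ (tpath hT x y).edges := by
  constructor
  · intro h
    by_contra he
    exact h ⟨(tpath hT x y).toDeleteEdges {e}
      (fun k hk hin => he (Set.mem_singleton_iff.1 hin ▸ hk))⟩
  · intro he hr
    obtain ⟨q⟩ := hr
    have hq : ∀ k ∈ q.edges, k ∈ T.edgeSet := by
      intro k hk
      have := q.edges_subset_edgeSet hk
      rw [SimpleGraph.edgeSet_deleteEdges] at this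
      exact this.1
    have hq' : e ∉ (q.transfer T hq).edges := by
      rw [SimpleGraph.Walk.edges_transfer]
      intro hk
      have := q.edges_subset_edgeSet hk
      rw [SimpleGraph.edgeSet_deleteEdges] at this
      exact this.2 rfl
    have hb := tpath_unique hT (q.transfer T hq).bypass ((q.transfer T hq).bypass_isPath)
    exact hq' ((q.transfer T hq).edges_bypass_subset (hb ▸ he))

lemma edge_reach {x y : V} (hxy : T.Adj x y) {e : Sym2 V} (hne : s(x,y) ≠ e) :
    (T.deleteEdges {e}).Reachable x y :=
  (SimpleGraph.deleteEdges_adj.2 ⟨hxy, by simp [hne]⟩).reachable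

lemma start_edge_unique {u z : V} {p : T.Walk u z} (hp : p.IsPath) {k1 k2 : Sym2 V}
    (h1 : k1 ∈ p.edges) (h2 : k2 ∈ p.edges) (hu1 : u ∈ k1) (hu2 : u ∈ k2) : k1 = k2 := by
  cases p with
  | nil => simp at h1
  | cons hadj q =>
    rw [SimpleGraph.Walk.edges_cons, List.mem_cons] at h1 h2
    have hq : ∀ k ∈ q.edges, u ∉ k := by
      intro k hk hu
      obtain ⟨t, rfl⟩ := Sym2.mem_iff_exists.1 hu
      exact ((SimpleGraph.Walk.cons_isPath_iff _ _).1 hp).2 (q.fst_mem_support_of_mem_edges hk)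
    rcases h1 with rfl | h1
    · rcases h2 with rfl | h2
      · rfl
      · exact absurd hu2 (hq _ h2)
    · exact absurd hu1 (hq _ h1)

lemma end_edge_unique {u z : V} {p : T.Walk u z} (hp : p.IsPath) {k1 k2 : Sym2 V}
    (h1 : k1 ∈ p.edges) (h2 : k2 ∈ p.edges) (hz1 : z ∈ k1) (hz2 : z ∈ k2) : k1 = k2 :=
  start_edge_unique hp.reverse
    (by rw [SimpleGraph.Walk.edges_reverse]; exact List.mem_reverse.2 h1)
    (by rw [SimpleGraph.Walk.edges_reverse]; exact List.mem_reverse.2 h2) hz1 hz2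

lemma quadrant (hT : T.IsTree) {a b x y : V} (hef : s(a,b) ≠ s(x,y)) {z : V}
    (h1 : ¬ (T.deleteEdges {s(a,b)}).Reachable z x)
    (h2 : ¬ (T.deleteEdges {s(x,y)}).Reachable z a) : False := by
  set W1 := tpath hT z x with hW1def
  have hW1 : W1.IsPath := tpath_isPath hT z x
  have he1 : s(a,b) ∈ W1.edges := (not_reach_iff hT _ z x).1 h1
  have ha : a ∈ W1.support := W1.fst_mem_support_of_mem_edges he1
  have hW2 : (W1.takeUntil a ha).IsPath := hW1.takeUntil ha
  have hW2eq : W1.takeUntil a ha = tpath hT z a := tpath_unique hT _ hW2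
  have hf2 : s(x,y) ∈ (W1.takeUntil a ha).edges := by
    rw [hW2eq]; exact (not_reach_iff hT _ z a).1 h2
  have hx : x ∈ (W1.takeUntil a ha).support :=
    (W1.takeUntil a ha).fst_mem_support_of_mem_edges hf2
  have hW3eq : (W1.takeUntil a ha).takeUntil x hx = tpath hT z x :=
    tpath_unique hT _ (hW2.takeUntil hx)
  have l3 := congrArg SimpleGraph.Walk.length (hW3eq.trans hW1def.symm)
  have l3' := (W1.takeUntil a ha).length_takeUntil_le hx
  have l2 := W1.length_takeUntil_le ha
  have hspec := congrArg SimpleGraph.Walk.length (W1.take_spec ha)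
  rw [SimpleGraph.Walk.length_append] at hspec
  have hax : a = x := by
    have hd : (W1.dropUntil a ha).length = 0 := by omega
    exact SimpleGraph.Walk.eq_of_length_eq_zero hd
  subst hax
  exact hef (end_edge_unique hW1 he1 ((W1.edges_takeUntil_subset ha) hf2)
    (Sym2.mem_mk_left _ _) (Sym2.mem_mk_left _ _))

lemma side_iff (hT : T.IsTree) {a b u v : V}
    (huv : ¬ (T.deleteEdges {s(a,b)}).Reachable u v) (w : V) :
    ¬ (T.deleteEdges {s(a,b)}).Reachable u w ↔ (T.deleteEdges {s(a,b)}).Reachable v w := by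
  have hu := reach_endpoint hT a b u
  have hv := reach_endpoint hT a b v
  have hw := reach_endpoint hT a b w
  constructor
  · intro h
    rcases hu with hu | hu <;> rcases hv with hv | hv
    · exact absurd (hu.trans hv.symm) huv
    · rcases hw with hw | hw
      · exact absurd (hu.trans hw.symm) h
      · exact hv.trans hw.symm
    · rcases hw with hw | hw
      · exact hv.trans hw.symm
      · exact absurd (hu.trans hw.symm) h
    · exact absurd (hu.trans hv.symm) huv
  · intro h hc
    exact huv (hc.trans h.symm)

lemma sep_iff (hT : T.IsTree) {u u' x y : V} (hg : T.Adj u u') (hf : T.Adj x y) (e : Sym2 V) :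
    Sep T e s(u,u') s(x,y) ↔
      (e ≠ s(u,u') ∧ e ≠ s(x,y) ∧ ¬ (T.deleteEdges {e}).Reachable u x) := by
  constructor
  · intro h
    refine ⟨?_, ?_, h u (Sym2.mem_mk_left _ _) x (Sym2.mem_mk_left _ _)⟩
    · rintro rfl
      rcases reach_endpoint hT u u' x with hr | hr
      · exact h u (Sym2.mem_mk_left _ _) x (Sym2.mem_mk_left _ _) hr.symm
      · exact h u' (Sym2.mem_mk_right _ _) x (Sym2.mem_mk_left _ _) hr.symm
    · rintro rfl
      rcases reach_endpoint hT x y u with hr | hr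
      · exact h u (Sym2.mem_mk_left _ _) x (Sym2.mem_mk_left _ _) hr
      · exact h u (Sym2.mem_mk_left _ _) y (Sym2.mem_mk_right _ _) hr
  · rintro ⟨h1, h2, h3⟩
    have Rg : (T.deleteEdges {e}).Reachable u u' := edge_reach hg (Ne.symm h1)
    have Rf : (T.deleteEdges {e}).Reachable x y := edge_reach hf (Ne.symm h2)
    intro p hp q hq
    rcases Sym2.mem_iff.1 hp with rfl | rfl <;> rcases Sym2.mem_iff.1 hq with rfl | rfl
    · exact h3
    · intro hr; exact h3 (hr.trans Rf.symm)
    · intro hr; exact h3 (Rg.trans hr)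
    · intro hr; exact h3 ((Rg.trans hr).trans Rf.symm)

lemma core' [Fintype V] (hT : T.IsTree)
    {u u' v v' : V} (hg : T.Adj u u') (hh : T.Adj v v')
    (h1 : T.dist u v ≤ T.dist u v') (h2 : T.dist u v ≤ T.dist u' v) :
    2 * (((edgeFS T).offDiag.filter
        (fun p => Sep T p.1 s(u,u') p.2 ∧ Sep T p.2 s(v,v') p.1)).card)
      = T.dist u v * (T.dist u v - 1) := by
  classical
  set P := tpath hT u v with hPdef
  have hPp : P.IsPath := tpath_isPath hT u v
  have hlen : P.length = T.dist u v := by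
    refine le_antisymm ?_ (SimpleGraph.dist_le P)
    obtain ⟨q, hq⟩ := hT.isConnected.exists_walk_length_eq_dist u v
    calc P.length = q.bypass.length :=
          congrArg SimpleGraph.Walk.length
            (hPdef.trans (tpath_unique hT q.bypass q.bypass_isPath).symm)
      _ ≤ q.length := q.length_bypass_le
      _ = _ := hq
  have hgP : s(u, u') ∉ P.edges := by
    intro hmem
    have hu' : u' ∈ P.support := P.snd_mem_support_of_mem_edges hmem
    have hsp := congrArg SimpleGraph.Walk.length (P.take_spec hu')
    rw [SimpleGraph.Walk.length_append] at hsp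
    have hd1 : T.dist u' v ≤ (P.dropUntil u' hu').length := SimpleGraph.dist_le _
    have hd2 : (P.takeUntil u' hu').length ≠ 0 := by
      intro h0
      exact hg.ne (SimpleGraph.Walk.eq_of_length_eq_zero h0)
    omega
  have hhP : s(v, v') ∉ P.edges := by
    intro hmem
    have hv' : v' ∈ P.support := P.snd_mem_support_of_mem_edges hmem
    have hsp := congrArg SimpleGraph.Walk.length (P.take_spec hv')
    rw [SimpleGraph.Walk.length_append] at hsp
    have hd1 : T.dist u v' ≤ (P.takeUntil v' hv').length := SimpleGraph.dist_le _
    have hd2 : (P.dropUntil v' hv').length ≠ 0 := by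
      intro h0
      exact hh.ne (SimpleGraph.Walk.eq_of_length_eq_zero h0).symm
    omega
  have claimA : ∀ e f : Sym2 V, e ∈ T.edgeSet → f ∈ T.edgeSet → e ≠ f →
      Sep T e s(u,u') f → Sep T f s(v,v') e → e ∈ P.edges ∧ f ∈ P.edges := by
    intro e f heE hfE hef s1 s2
    obtain ⟨A, B, rfl⟩ := sym2_rep e
    obtain ⟨X, Y, rfl⟩ := sym2_rep f
    have he : T.Adj A B := T.mem_edgeSet.1 heE
    have hf : T.Adj X Y := T.mem_edgeSet.1 hfE
    obtain ⟨-, hef1, hux⟩ := (sep_iff hT hg hf _).1 s1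
    obtain ⟨-, hfe1, hva⟩ := (sep_iff hT hh he _).1 s2
    have hRvx : (T.deleteEdges {s(A,B)}).Reachable v X := by
      by_contra hc
      exact quadrant hT hef hc hva
    have hRua : (T.deleteEdges {s(X,Y)}).Reachable u A := by
      by_contra hc
      exact quadrant hT (Ne.symm hef) hc hux
    constructor
    · have := (not_reach_iff hT s(A,B) u v).1 (fun hr => hux (hr.trans hRvx))
      rwa [← hPdef] at this
    · have := (not_reach_iff hT s(X,Y) u v).1 (fun hr => hva (hr.symm.trans hRua))
      rwa [← hPdef] at this
  have claimMain : ∀ e f : Sym2 V, e ∈ P.edges → f ∈ P.edges → e ≠ f →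
      ((Sep T e s(u,u') f ∧ Sep T f s(v,v') e) ↔
        ¬ (Sep T f s(u,u') e ∧ Sep T e s(v,v') f)) := by
    intro e f heP hfP hef
    obtain ⟨A, B, rfl⟩ := sym2_rep e
    obtain ⟨X, Y, rfl⟩ := sym2_rep f
    have heE : s(A,B) ∈ T.edgeSet := P.edges_subset_edgeSet heP
    have hfE : s(X,Y) ∈ T.edgeSet := P.edges_subset_edgeSet hfP
    have he : T.Adj A B := T.mem_edgeSet.1 heE
    have hf : T.Adj X Y := T.mem_edgeSet.1 hfE
    have hne_eg : s(A,B) ≠ s(u,u') := fun hk => hgP (hk ▸ heP)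
    have hne_fg : s(X,Y) ≠ s(u,u') := fun hk => hgP (hk ▸ hfP)
    have hne_eh : s(A,B) ≠ s(v,v') := fun hk => hhP (hk ▸ heP)
    have hne_fh : s(X,Y) ≠ s(v,v') := fun hk => hhP (hk ▸ hfP)
    have hnuv_e : ¬ (T.deleteEdges {s(A,B)}).Reachable u v := by
      rw [not_reach_iff hT _ u v, ← hPdef]; exact heP
    have hnuv_f : ¬ (T.deleteEdges {s(X,Y)}).Reachable u v := by
      rw [not_reach_iff hT _ u v, ← hPdef]; exact hfP
    have hAB : ¬ (T.deleteEdges {s(A,B)}).Reachable u X →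
        ¬ (T.deleteEdges {s(X,Y)}).Reachable v A := by
      intro hA
      have hRua : (T.deleteEdges {s(X,Y)}).Reachable u A := by
        by_contra hc
        exact quadrant hT (Ne.symm hef) hc hA
      intro hva
      exact hnuv_f (hRua.trans hva.symm)
    have hBA : ¬ (T.deleteEdges {s(X,Y)}).Reachable v A →
        ¬ (T.deleteEdges {s(A,B)}).Reachable u X := by
      intro hB
      have hRvx : (T.deleteEdges {s(A,B)}).Reachable v X := by
        by_contra hc
        exact quadrant hT hef hc hB
      intro hux
      exact hnuv_e (hux.trans hRvx.symm)
    have hsideF := side_iff hT hnuv_f A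
    have hsideE := side_iff hT (fun hr => hnuv_e hr.symm) X
    rw [sep_iff hT hg hf, sep_iff hT hh he, sep_iff hT hg he, sep_iff hT hh hf]
    constructor
    · rintro ⟨⟨-, -, hA⟩, ⟨-, -, hB⟩⟩ ⟨⟨-, -, hA'⟩, -⟩
      exact hB (hsideF.1 hA')
    · intro hnot
      have hA : ¬ (T.deleteEdges {s(A,B)}).Reachable u X := by
        by_contra hux
        apply hnot
        have hB' : (T.deleteEdges {s(X,Y)}).Reachable v A :=
          Classical.byContradiction fun h => (hBA h) hux
        exact ⟨⟨hne_fg, Ne.symm hef, hsideF.2 hB'⟩, ⟨hne_eh, hef, hsideE.2 hux⟩⟩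
      exact ⟨⟨hne_eg, hef, hA⟩, ⟨hne_fh, Ne.symm hef, hAB hA⟩⟩
  set c : Sym2 V × Sym2 V → Prop :=
    fun p => Sep T p.1 s(u,u') p.2 ∧ Sep T p.2 s(v,v') p.1 with hc
  set D := P.edges.toFinset.offDiag with hD
  have hfilter_eq : (edgeFS T).offDiag.filter c = D.filter c := by
    ext p
    simp only [Finset.mem_filter, Finset.mem_offDiag, hD, List.mem_toFinset]
    constructor
    · rintro ⟨⟨hp1, hp2, hne⟩, hcp⟩
      have hEp1 : p.1 ∈ T.edgeSet := by simpa [edgeFS] using hp1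
      have hEp2 : p.2 ∈ T.edgeSet := by simpa [edgeFS] using hp2
      obtain ⟨hA, hB⟩ := claimA p.1 p.2 hEp1 hEp2 hne hcp.1 hcp.2
      exact ⟨⟨hA, hB, hne⟩, hcp⟩
    · rintro ⟨⟨hp1, hp2, hne⟩, hcp⟩
      refine ⟨⟨?_, ?_, hne⟩, hcp⟩
      · simpa [edgeFS] using P.edges_subset_edgeSet hp1
      · simpa [edgeFS] using P.edges_subset_edgeSet hp2
  have hswap : (D.filter c).card = (D.filter (fun p => ¬ c p)).card := by
    apply Finset.card_bij (fun p _ => Prod.swap p)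
    · intro p hp
      rw [Finset.mem_filter] at hp ⊢
      obtain ⟨hpD, hpc⟩ := hp
      rw [Finset.mem_offDiag] at hpD
      refine ⟨Finset.mem_offDiag.2 ⟨hpD.2.1, hpD.1, (Ne.symm hpD.2.2)⟩, ?_⟩
      exact (claimMain p.1 p.2 (List.mem_toFinset.1 hpD.1) (List.mem_toFinset.1 hpD.2.1)
        hpD.2.2).1 hpc
    · intro p hp q hq h
      exact Prod.swap_injective h
    · intro q hq
      rw [Finset.mem_filter] at hq
      obtain ⟨hqD, hqc⟩ := hq
      rw [Finset.mem_offDiag] at hqD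
      refine ⟨q.swap, ?_, Prod.swap_swap q⟩
      rw [Finset.mem_filter]
      refine ⟨Finset.mem_offDiag.2 ⟨hqD.2.1, hqD.1, Ne.symm hqD.2.2⟩, ?_⟩
      exact (claimMain q.2 q.1 (List.mem_toFinset.1 hqD.2.1) (List.mem_toFinset.1 hqD.1)
        (Ne.symm hqD.2.2)).2 hqc
  have hpart := Finset.card_filter_add_card_filter_not (s := D) (p := c)
  have hDcard : D.card = P.length * P.length - P.length := by
    rw [hD, Finset.offDiag_card, List.toFinset_card_of_nodup hPp.edges_nodup,
      SimpleGraph.Walk.length_edges]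
  rw [hfilter_eq]
  have h2c : 2 * (D.filter c).card = D.card := by omega
  rw [h2c, hDcard, ← hlen]
  have hgen : ∀ n : ℕ, n * n - n = n * (n - 1) := by
    intro n
    cases n with
    | zero => rfl
    | succ k =>
      rw [Nat.succ_sub_one, Nat.mul_succ, Nat.add_sub_cancel]
  exact hgen _

lemma edgeDhat_mk (a b x y : V) :
    edgeDhat T s(a,b) s(x,y)
      = min (min (T.dist a x) (T.dist a y)) (min (T.dist b x) (T.dist b y)) := rfl

lemma edgeDhat_self (g : Sym2 V) : edgeDhat T g g = 0 := by
  obtain ⟨a, b, rfl⟩ := sym2_rep g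
  rw [edgeDhat_mk]
  have := T.dist_self (v := a)
  have := T.dist_self (v := b)
  omega

lemma core [Fintype V] (hT : T.IsTree)
    {g h : Sym2 V} (hgE : g ∈ T.edgeSet) (hhE : h ∈ T.edgeSet) :
    2 * (((edgeFS T).offDiag.filter
        (fun p => Sep T p.1 g p.2 ∧ Sep T p.2 h p.1)).card)
      = edgeDhat T g h * (edgeDhat T g h - 1) := by
  obtain ⟨a, b, rfl⟩ := sym2_rep g
  obtain ⟨x, y, rfl⟩ := sym2_rep h
  have hab : T.Adj a b := T.mem_edgeSet.1 hgE
  have hxy : T.Adj x y := T.mem_edgeSet.1 hhE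
  obtain ⟨⟨p1, p2⟩, hmem, hmin⟩ := Finset.exists_min_image
    ({(a,x),(a,y),(b,x),(b,y)} : Finset (V×V)) (fun p => T.dist p.1 p.2) ⟨(a,x), by simp⟩
  have m1 := hmin (a,x) (by simp)
  have m2 := hmin (a,y) (by simp)
  have m3 := hmin (b,x) (by simp)
  have m4 := hmin (b,y) (by simp)
  simp only [Finset.mem_insert, Finset.mem_singleton, Prod.mk.injEq] at hmem
  rw [edgeDhat_mk]
  rcases hmem with ⟨rfl, rfl⟩ | ⟨rfl, rfl⟩ | ⟨rfl, rfl⟩ | ⟨rfl, rfl⟩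
  · simp only at m1 m2 m3 m4
    have hval : min (min (T.dist p1 p2) (T.dist p1 y)) (min (T.dist b p2) (T.dist b y))
        = T.dist p1 p2 := by omega
    rw [hval]
    exact core' hT hab hxy m2 m3
  · simp only at m1 m2 m3 m4
    have hval : min (min (T.dist p1 x) (T.dist p1 p2)) (min (T.dist b x) (T.dist b p2))
        = T.dist p1 p2 := by omega
    rw [hval, show s(x, p2) = s(p2, x) from Sym2.eq_swap]
    exact core' hT hab hxy.symm m1 m4
  · simp only at m1 m2 m3 m4
    have hval : min (min (T.dist a p2) (T.dist a y)) (min (T.dist p1 p2) (T.dist p1 y))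
        = T.dist p1 p2 := by omega
    rw [hval, show s(a, p1) = s(p1, a) from Sym2.eq_swap]
    exact core' hT hab.symm hxy m4 m1
  · simp only at m1 m2 m3 m4
    have hval : min (min (T.dist a x) (T.dist a p2)) (min (T.dist p1 x) (T.dist p1 p2))
        = T.dist p1 p2 := by omega
    rw [hval, show s(a, p1) = s(p1, a) from Sym2.eq_swap,
      show s(x, p2) = s(p2, x) from Sym2.eq_swap]
    exact core' hT hab.symm hxy.symm m3 m2

lemma keynat [Fintype V] (hT : T.IsTree) :
    ∑ p ∈ (edgeFS T).offDiag, edgeDhat T p.1 p.2 * (edgeDhat T p.1 p.2 - 1)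
      = 2 * ∑ p ∈ (edgeFS T).offDiag,
          extremalEdgeCount T p.1 p.2 * extremalEdgeCount T p.2 p.1 := by
  classical
  have hedge : ∀ g ∈ edgeFS T, g ∈ T.edgeSet := fun g hg => by simpa [edgeFS] using hg
  have h1 : ∀ p : Sym2 V × Sym2 V,
      extremalEdgeCount T p.1 p.2 * extremalEdgeCount T p.2 p.1
        = ∑ q ∈ edgeFS T ×ˢ edgeFS T,
            (if Sep T p.1 q.1 p.2 ∧ Sep T p.2 q.2 p.1 then 1 else 0) := by
    intro p
    have e1 : extremalEdgeCount T p.1 p.2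
        = ((edgeFS T).filter (fun g => Sep T p.1 g p.2)).card := by
      unfold extremalEdgeCount Sep; congr
    have e2 : extremalEdgeCount T p.2 p.1
        = ((edgeFS T).filter (fun g => Sep T p.2 g p.1)).card := by
      unfold extremalEdgeCount Sep; congr
    rw [e1, e2, Finset.card_filter, Finset.card_filter, Finset.sum_mul_sum,
      Finset.sum_product]
    refine Finset.sum_congr rfl fun g _ => Finset.sum_congr rfl fun h _ => ?_
    by_cases hA : Sep T p.1 g p.2 <;> by_cases hB : Sep T p.2 h p.1 <;> simp [hA, hB]
  have h2 : ∀ q ∈ edgeFS T ×ˢ edgeFS T,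
      2 * ∑ p ∈ (edgeFS T).offDiag,
          (if Sep T p.1 q.1 p.2 ∧ Sep T p.2 q.2 p.1 then 1 else 0)
        = edgeDhat T q.1 q.2 * (edgeDhat T q.1 q.2 - 1) := by
    intro q hq
    rw [Finset.mem_product] at hq
    rw [← Finset.card_filter]
    exact core hT (hedge _ hq.1) (hedge _ hq.2)
  calc ∑ p ∈ (edgeFS T).offDiag, edgeDhat T p.1 p.2 * (edgeDhat T p.1 p.2 - 1)
      = ∑ q ∈ edgeFS T ×ˢ edgeFS T, edgeDhat T q.1 q.2 * (edgeDhat T q.1 q.2 - 1) := by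
        rw [← Finset.sum_filter_add_sum_filter_not (edgeFS T ×ˢ edgeFS T)
          (fun q => q.1 ≠ q.2)]
        have hoff : (edgeFS T ×ˢ edgeFS T).filter (fun q => q.1 ≠ q.2)
            = (edgeFS T).offDiag := by
          ext q
          simp [Finset.mem_offDiag, Finset.mem_filter, Finset.mem_product]
          tauto
        have hzero : ∀ q ∈ (edgeFS T ×ˢ edgeFS T).filter (fun q => ¬ q.1 ≠ q.2),
            edgeDhat T q.1 q.2 * (edgeDhat T q.1 q.2 - 1) = 0 := by
          intro q hq
          rw [Finset.mem_filter, not_ne_iff] at hq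
          rw [← hq.2, edgeDhat_self]
        rw [hoff, Finset.sum_eq_zero hzero, add_zero]
    _ = ∑ q ∈ edgeFS T ×ˢ edgeFS T, 2 * ∑ p ∈ (edgeFS T).offDiag,
          (if Sep T p.1 q.1 p.2 ∧ Sep T p.2 q.2 p.1 then 1 else 0) :=
        (Finset.sum_congr rfl h2).symm
    _ = 2 * ∑ q ∈ edgeFS T ×ˢ edgeFS T, ∑ p ∈ (edgeFS T).offDiag,
          (if Sep T p.1 q.1 p.2 ∧ Sep T p.2 q.2 p.1 then 1 else 0) := by
        rw [Finset.mul_sum]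
    _ = 2 * ∑ p ∈ (edgeFS T).offDiag, ∑ q ∈ edgeFS T ×ˢ edgeFS T,
          (if Sep T p.1 q.1 p.2 ∧ Sep T p.2 q.2 p.1 then 1 else 0) := by
        rw [Finset.sum_comm]
    _ = 2 * ∑ p ∈ (edgeFS T).offDiag,
          extremalEdgeCount T p.1 p.2 * extremalEdgeCount T p.2 p.1 := by
        rw [Finset.sum_congr rfl fun p _ => (h1 p).symm]

end EdgeHW

/-- For a finite tree `T` with `m ≥ 1` edges:
`WW_e(T) = 2·W_e(T) + Σ_{{e,f} ⊆ E(T)} m₁(e,f)·m₂(e,f) − m(m−1)/2`, where the (unordered)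
pair sum is computed as half of the sum over ordered pairs of distinct edges. -/
theorem edgeHyperWiener_tree {V : Type*} [Fintype V] (T : SimpleGraph V) (hT : T.IsTree)
    (m : ℕ) (hm : m = (edgeFS T).card) (hm1 : 1 ≤ m) :
    edgeHyperWiener T =
      2 * edgeWiener T +
        (∑ p ∈ (edgeFS T).offDiag,
          ((extremalEdgeCount T p.1 p.2 * extremalEdgeCount T p.2 p.1 : ℕ) : ℚ)) / 2 -
        (m : ℚ) * ((m : ℚ) - 1) / 2 := by
  classical
  have key := EdgeHW.keynat hT
  have h0 : ∀ d : ℕ, ((d * (d - 1) : ℕ) : ℚ) = (d : ℚ) * ((d : ℚ) - 1) := by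
    intro d
    cases d with
    | zero => simp
    | succ k => push_cast [Nat.succ_sub_one]; ring
  have keyQ : (∑ p ∈ (edgeFS T).offDiag,
        (edgeDhat T p.1 p.2 : ℚ) * ((edgeDhat T p.1 p.2 : ℚ) - 1))
      = 2 * ∑ p ∈ (edgeFS T).offDiag,
          ((extremalEdgeCount T p.1 p.2 * extremalEdgeCount T p.2 p.1 : ℕ) : ℚ) := by
    calc ∑ p ∈ (edgeFS T).offDiag, (edgeDhat T p.1 p.2 : ℚ) * ((edgeDhat T p.1 p.2 : ℚ) - 1)
        = ∑ p ∈ (edgeFS T).offDiag,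
            ((edgeDhat T p.1 p.2 * (edgeDhat T p.1 p.2 - 1) : ℕ) : ℚ) :=
          Finset.sum_congr rfl (fun p _ => (h0 _).symm)
      _ = ((∑ p ∈ (edgeFS T).offDiag,
            edgeDhat T p.1 p.2 * (edgeDhat T p.1 p.2 - 1) : ℕ) : ℚ) := by push_cast; rfl
      _ = ((2 * ∑ p ∈ (edgeFS T).offDiag,
            extremalEdgeCount T p.1 p.2 * extremalEdgeCount T p.2 p.1 : ℕ) : ℚ) := by rw [key]
      _ = _ := by push_cast; ring
  have hcard : (((edgeFS T).offDiag.card : ℕ) : ℚ) = (m : ℚ) * ((m : ℚ) - 1) := by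
    rw [Finset.offDiag_card, ← hm]
    have hle : m ≤ m * m := Nat.le_mul_of_pos_left m hm1
    push_cast [Nat.cast_sub hle]
    ring
  have hY : (∑ p ∈ (edgeFS T).offDiag, ((edgeDhat T p.1 p.2 : ℚ) + 1) ^ 2)
      = (∑ p ∈ (edgeFS T).offDiag,
          (edgeDhat T p.1 p.2 : ℚ) * ((edgeDhat T p.1 p.2 : ℚ) - 1))
        + 3 * (∑ p ∈ (edgeFS T).offDiag, ((edgeDhat T p.1 p.2 : ℚ) + 1))
        - 2 * ((edgeFS T).offDiag.card : ℚ) := by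
    have hterm : ∀ p ∈ (edgeFS T).offDiag, ((edgeDhat T p.1 p.2 : ℚ) + 1) ^ 2
        = ((edgeDhat T p.1 p.2 : ℚ) * ((edgeDhat T p.1 p.2 : ℚ) - 1)
            + 3 * ((edgeDhat T p.1 p.2 : ℚ) + 1) - 2) := fun p _ => by ring
    rw [Finset.sum_congr rfl hterm, Finset.sum_sub_distrib, Finset.sum_add_distrib,
      ← Finset.mul_sum, Finset.sum_const, nsmul_eq_mul, mul_comm ((edgeFS T).offDiag.card : ℚ) 2]
  unfold edgeHyperWiener edgeWiener
  rw [hY]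
  linarith [keyQ, hcard]
end

section
/- For every h ≥ 1, the edge-hyper-Wiener index of the linear polyacene L_h satisfies WW_e(L_h) = h(25h³ + 71h² + 77h + 79)/6; equivalently, 6·WW_e(L_h) = h(25h³ + 71h² + 77h + 79). -/
open scoped Classical

/-- The linear polyacene `L_h`: the graph of `h` linearly fused hexagons, with vertex set
`{0,…,2h} × {0,1}`, edges joining `(i,j)` and `(i+1,j)`, and edges joining `(i,0)` and `(i,1)`
for every even `i`. -/
def polyacene (h : ℕ) : SimpleGraph (Fin (2 * h + 1) × Fin 2) :=
  SimpleGraph.fromRel (fun u v =>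
    (u.2 = v.2 ∧ (u.1 : ℕ) + 1 = (v.1 : ℕ)) ∨ (u.1 = v.1 ∧ Even (u.1 : ℕ) ∧ u.2 ≠ v.2))

/-- The edge-Wiener index `W_e(G) = Σ_{{e,f} ⊆ E(G)} d(e,f)`, where `d(e,f)` is the distance
between `e` and `f` as vertices of the line graph `L(G)`; the sum over unordered pairs of
distinct edges is computed as half of the sum over ordered pairs of distinct edges. -/
noncomputable def edgeWienerLine {V : Type*} [Fintype V] (G : SimpleGraph V) : ℚ :=
  letI : Fintype ↥G.edgeSet := (Set.toFinite G.edgeSet).fintype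
  (∑ p ∈ (Finset.univ : Finset ↥G.edgeSet).offDiag, (G.lineGraph.dist p.1 p.2 : ℚ)) / 2

/-- The edge-hyper-Wiener index
`WW_e(G) = ½·Σ_{{e,f} ⊆ E(G)} d(e,f) + ½·Σ_{{e,f} ⊆ E(G)} d(e,f)²`, where `d(e,f)` is the
distance in the line graph `L(G)`; sums over unordered pairs of distinct edges (computed as
halves of the corresponding ordered sums). -/
noncomputable def edgeHyperWienerLine {V : Type*} [Fintype V] (G : SimpleGraph V) : ℚ :=
  letI : Fintype ↥G.edgeSet := (Set.toFinite G.edgeSet).fintype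
  (∑ p ∈ (Finset.univ : Finset ↥G.edgeSet).offDiag, (G.lineGraph.dist p.1 p.2 : ℚ)) / 4 +
    (∑ p ∈ (Finset.univ : Finset ↥G.edgeSet).offDiag, (G.lineGraph.dist p.1 p.2 : ℚ) ^ 2) / 4

/-!
The distance in the line graph between two distinct edges is one more than the least distance
between their endpoints. In the ladder `polyacene h`, whose rungs sit at the even columns, two
vertices of the same row are at distance the difference of their columns, and two vertices of
different rows at that difference plus one, except in the same odd column, where it is `3`.
Hence the distance between two edges is explicit for each of the four kinds of pairs
(horizontal edges in one row, horizontal edges in different rows, a horizontal edge and a rung,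
two rungs), and summing `d + d²` over each kind gives a polynomial in `h`, by induction on `h`.
-/

open SimpleGraph Finset

namespace SimpleGraph

variable {V : Type*} {G : SimpleGraph V}

theorem Walk.exists_lineGraph_walk_length_le {u v : V} (p : G.Walk u v) {e f : G.edgeSet}
    (hu : u ∈ (e : Sym2 V)) (hv : v ∈ (f : Sym2 V)) :
    ∃ P : G.lineGraph.Walk e f, P.length ≤ p.length + 1 := by
  induction p generalizing e with
  | nil =>
    by_cases hef : e = f
    · subst hef
      exact ⟨.nil, by simp⟩
    · exact ⟨(lineGraph_adj_iff_exists.2 ⟨hef, _, hu, hv⟩).toWalk, by simp⟩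
  | @cons a b c hab q ih =>
    let g : G.edgeSet := ⟨s(a, b), hab⟩
    obtain ⟨P, hP⟩ := ih (e := g) (Sym2.mem_mk_right a b) hv
    by_cases heg : e = g
    · subst heg
      exact ⟨P, by simp only [Walk.length_cons]; omega⟩
    · have hadj : G.lineGraph.Adj e g :=
        lineGraph_adj_iff_exists.2 ⟨heg, a, hu, Sym2.mem_mk_left a b⟩
      exact ⟨.cons hadj P, by simp only [Walk.length_cons]; omega⟩

theorem Walk.exists_walk_of_lineGraph_walk {e f : G.edgeSet} (P : G.lineGraph.Walk e f)
    (hef : e ≠ f) : ∃ u ∈ (e : Sym2 V), ∃ v ∈ (f : Sym2 V),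
      ∃ p : G.Walk u v, p.length + 1 ≤ P.length := by
  induction P with
  | nil => exact absurd rfl hef
  | @cons e g f hadj Q ih =>
    obtain ⟨-, x, hxe, hxg⟩ := lineGraph_adj_iff_exists.1 hadj
    by_cases hgf : g = f
    · subst hgf
      exact ⟨x, hxe, x, hxg, .nil, by simp⟩
    · obtain ⟨u, hu, v, hv, p, hp⟩ := ih hgf
      obtain ⟨r, hr⟩ : ∃ r : G.Walk x u, r.length ≤ 1 := by
        by_cases hxu : x = u
        · subst hxu
          exact ⟨.nil, by simp⟩
        · have hg : (g : Sym2 V) = s(x, u) := (Sym2.mem_and_mem_iff hxu).1 ⟨hxg, hu⟩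
          have hadj' : G.Adj x u := by rw [← SimpleGraph.mem_edgeSet, ← hg]; exact g.2
          exact ⟨hadj'.toWalk, by simp⟩
      exact ⟨x, hxe, v, hv, r.append p, by simp only [Walk.length_append, Walk.length_cons]; omega⟩

theorem lineGraph_dist_le_dist_add_one {u v : V} (huv : G.Reachable u v) {e f : G.edgeSet}
    (hu : u ∈ (e : Sym2 V)) (hv : v ∈ (f : Sym2 V)) :
    G.lineGraph.dist e f ≤ G.dist u v + 1 := by
  obtain ⟨p, hp⟩ := huv.exists_walk_length_eq_dist
  obtain ⟨P, hP⟩ := p.exists_lineGraph_walk_length_le hu hv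
  exact (dist_le P).trans (hp ▸ hP)

theorem exists_dist_add_one_le_lineGraph_dist {e f : G.edgeSet} (hef : e ≠ f)
    (hr : G.lineGraph.Reachable e f) :
    ∃ u ∈ (e : Sym2 V), ∃ v ∈ (f : Sym2 V), G.dist u v + 1 ≤ G.lineGraph.dist e f := by
  obtain ⟨P, hP⟩ := hr.exists_walk_length_eq_dist
  obtain ⟨u, hu, v, hv, p, hp⟩ := P.exists_walk_of_lineGraph_walk hef
  exact ⟨u, hu, v, hv, hP ▸ (Nat.add_le_add_right (dist_le p) 1).trans hp⟩

theorem Connected.lineGraph_dist (hG : G.Connected) {e f : G.edgeSet} {a b c d : V}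
    (he : (e : Sym2 V) = s(a, b)) (hf : (f : Sym2 V) = s(c, d)) (hef : e ≠ f) :
    G.lineGraph.dist e f =
      min (min (G.dist a c) (G.dist a d)) (min (G.dist b c) (G.dist b d)) + 1 := by
  have hle : ∀ u ∈ (e : Sym2 V), ∀ v ∈ (f : Sym2 V), G.lineGraph.dist e f ≤ G.dist u v + 1 :=
    fun u hu v hv => lineGraph_dist_le_dist_add_one (hG u v) hu hv
  have hr : G.lineGraph.Reachable e f := by
    obtain ⟨p⟩ := hG a c
    obtain ⟨P, -⟩ := p.exists_lineGraph_walk_length_le (he ▸ Sym2.mem_mk_left a b)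
      (hf ▸ Sym2.mem_mk_left c d)
    exact ⟨P⟩
  obtain ⟨u, hu, v, hv, hge⟩ := exists_dist_add_one_le_lineGraph_dist hef hr
  rw [he] at hu hle
  rw [hf] at hv hle
  have := hle a (Sym2.mem_mk_left a b) c (Sym2.mem_mk_left c d)
  have := hle a (Sym2.mem_mk_left a b) d (Sym2.mem_mk_right c d)
  have := hle b (Sym2.mem_mk_right a b) c (Sym2.mem_mk_left c d)
  have := hle b (Sym2.mem_mk_right a b) d (Sym2.mem_mk_right c d)
  rcases Sym2.mem_iff.1 hu with rfl | rfl <;> rcases Sym2.mem_iff.1 hv with rfl | rfl <;> omega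

end SimpleGraph

/-- `m + m²`: four times the contribution of an ordered pair of edges at distance `m` to
`edgeHyperWienerLine`. -/
def hyperWeight (m : ℕ) : ℚ := m + m ^ 2

theorem sum_offDiag_univ {α M : Type*} [Fintype α] [DecidableEq α] [AddCommMonoid M]
    (F : α × α → M) :
    ∑ p ∈ (univ : Finset α).offDiag, F p = ∑ a, ∑ b, if a = b then 0 else F (a, b) := by
  have hoff : (univ : Finset α).offDiag = univ.filter fun p => p.1 ≠ p.2 := by ext; simp
  rw [hoff, sum_filter, Fintype.sum_prod_type]
  simp only [ne_eq, ite_not]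

theorem edgeHyperWienerLine_eq_sum {V ι : Type*} [Fintype V] [Fintype ι] [DecidableEq ι]
    (G : SimpleGraph V) (σ : ι ≃ G.edgeSet) :
    edgeHyperWienerLine G =
      (∑ x, ∑ y, if x = y then 0 else hyperWeight (G.lineGraph.dist (σ x) (σ y))) / 4 := by
  let _ : Fintype G.edgeSet := (Set.toFinite G.edgeSet).fintype
  unfold edgeHyperWienerLine
  rw [← add_div, ← sum_add_distrib, sum_offDiag_univ, ← σ.sum_comp]
  congr 1
  refine sum_congr rfl fun x _ => ?_
  rw [← σ.sum_comp]
  simp only [σ.injective.eq_iff, hyperWeight]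

theorem sum_range_succ_sum_range_succ {M : Type*} [AddCommMonoid M] (F : ℕ → ℕ → M) (n : ℕ) :
    ∑ i ∈ range (n + 1), ∑ j ∈ range (n + 1), F i j =
      ∑ i ∈ range n, ∑ j ∈ range n, F i j + ∑ i ∈ range n, F i n + ∑ j ∈ range n, F n j +
        F n n := by
  simp only [sum_range_succ, sum_add_distrib]
  abel

theorem sum_range_eq_of_reflect {M : Type*} [AddCommMonoid M] {f g : ℕ → M} {n : ℕ}
    (hfg : ∀ i < n, f i = g (n - 1 - i)) : ∑ i ∈ range n, f i = ∑ i ∈ range n, g i := by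
  rw [← sum_range_reflect g n]
  exact sum_congr rfl fun i hi => hfg i (mem_range.1 hi)

theorem sum_range_hyperWeight {f : ℕ → ℕ} {a b : ℕ} (hf : ∀ d, f d = a * d + b) (n : ℕ) :
    ∑ d ∈ range n, hyperWeight (f d) =
      n * (b + b ^ 2) + a * (2 * b + 1) * (n * (n - 1) / 2) +
        a ^ 2 * ((n - 1) * n * (2 * n - 1) / 6) := by
  induction n with
  | zero => simp
  | succ n ih =>
    rw [sum_range_succ, ih, hf, hyperWeight]
    push_cast
    ring

def offDiagDistSum (g : ℕ → ℚ) (n : ℕ) : ℚ :=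
  ∑ i ∈ range n, ∑ j ∈ range n, if i = j then 0 else g (Nat.dist i j)

theorem offDiagDistSum_succ (g : ℕ → ℚ) (n : ℕ) :
    offDiagDistSum g (n + 1) = offDiagDistSum g n + 2 * ∑ d ∈ range n, g (d + 1) := by
  have hrow : ∑ i ∈ range n, (if i = n then 0 else g (Nat.dist i n)) =
      ∑ d ∈ range n, g (d + 1) :=
    sum_range_eq_of_reflect fun i hi => by
      rw [if_neg hi.ne, Nat.dist]
      congr 1
      omega
  have hcol : ∑ j ∈ range n, (if n = j then 0 else g (Nat.dist n j)) =
      ∑ d ∈ range n, g (d + 1) := by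
    rw [← hrow]
    exact sum_congr rfl fun i _ => by rw [Nat.dist_comm]; exact if_congr eq_comm rfl rfl
  rw [offDiagDistSum, sum_range_succ_sum_range_succ, hrow, hcol, if_pos rfl, ← offDiagDistSum]
  ring

theorem offDiagDistSum_hyperWeight (n : ℕ) :
    offDiagDistSum hyperWeight n = (n ^ 4 + 2 * n ^ 3 - n ^ 2 - 2 * n) / 6 := by
  induction n with
  | zero => simp [offDiagDistSum]
  | succ n ih =>
    rw [offDiagDistSum_succ, ih, sum_range_hyperWeight (a := 1) (b := 1) (fun d => by ring)]
    push_cast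
    ring

theorem offDiagDistSum_hyperWeight_two_mul_add_one (n : ℕ) :
    offDiagDistSum (fun d => hyperWeight (2 * d + 1)) n =
      (2 * n ^ 4 + 6 * n ^ 3 + 4 * n ^ 2 - 12 * n) / 3 := by
  induction n with
  | zero => simp [offDiagDistSum]
  | succ n ih =>
    rw [offDiagDistSum_succ, ih, sum_range_hyperWeight (a := 2) (b := 3) (fun d => by ring)]
    push_cast
    ring

theorem sum_fin_sum_fin_eq_sum_range {M : Type*} [AddCommMonoid M] (m n : ℕ) (F : ℕ → ℕ → M) :
    ∑ x : Fin m, ∑ y : Fin n, F x y = ∑ i ∈ range m, ∑ j ∈ range n, F i j := by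
  rw [Fin.sum_univ_eq_sum_range (fun i => ∑ y : Fin n, F i y)]
  exact sum_congr rfl fun i _ => Fin.sum_univ_eq_sum_range (F i) n

namespace Polyacene

variable {h : ℕ}

theorem adj_iff {u v : Fin (2 * h + 1) × Fin 2} : (polyacene h).Adj u v ↔
    ((u.2 : ℕ) = v.2 ∧ Nat.dist u.1 v.1 = 1) ∨
      ((u.1 : ℕ) = v.1 ∧ (u.1 : ℕ) % 2 = 0 ∧ (u.2 : ℕ) ≠ v.2) := by
  rw [polyacene, fromRel_adj]
  simp only [ne_eq, Prod.ext_iff, Fin.ext_iff, Nat.even_iff, Nat.dist]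
  omega

theorem exists_walk_row (j : Fin 2) :
    ∀ (d : ℕ) (a b : Fin (2 * h + 1)), (b : ℕ) = a + d →
      ∃ p : (polyacene h).Walk (a, j) (b, j), p.length = d
  | 0, a, b, hab => by
    obtain rfl : a = b := Fin.ext hab.symm
    exact ⟨.nil, rfl⟩
  | d + 1, a, b, hab => by
    obtain ⟨p, hp⟩ := exists_walk_row j d a ⟨b - 1, by omega⟩ (by simp; omega)
    have hadj : (polyacene h).Adj (⟨b - 1, by omega⟩, j) (b, j) :=
      adj_iff.2 (.inl ⟨rfl, by simp [Nat.dist]; omega⟩)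
    exact ⟨p.concat hadj, by simp [hp]⟩

theorem connected : (polyacene h).Connected := by
  have hrow : ∀ (a : Fin (2 * h + 1)) (j : Fin 2), (polyacene h).Reachable (0, j) (a, j) :=
    fun a j => (exists_walk_row j a 0 a (by simp)).elim fun p _ => ⟨p⟩
  have hrung : (polyacene h).Adj (0, 0) (0, 1) := adj_iff.2 (.inr ⟨rfl, by simp, by simp⟩)
  have hbase : ∀ w : Fin (2 * h + 1) × Fin 2, (polyacene h).Reachable (0, 0) w := by
    rintro ⟨a, j⟩
    fin_cases j
    · exact hrow a 0
    · exact hrung.reachable.trans (hrow a 1)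
  exact .mk fun u v => (hbase u).symm.trans (hbase v)

theorem dist_row_le (a b : Fin (2 * h + 1)) (j : Fin 2) :
    (polyacene h).dist (a, j) (b, j) ≤ Nat.dist a b := by
  wlog hab : (a : ℕ) ≤ b generalizing a b
  · rw [dist_comm, Nat.dist_comm]
    exact this b a (by omega)
  obtain ⟨p, hp⟩ := exists_walk_row j (b - a) a b (by omega)
  exact (dist_le p).trans (by rw [hp, Nat.dist]; omega)

theorem dist_le_of_even {a b k : Fin (2 * h + 1)} (hk : (k : ℕ) % 2 = 0)
    {j j' : Fin 2} (hj : j ≠ j') :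
    (polyacene h).dist (a, j) (b, j') ≤ Nat.dist a k + 1 + Nat.dist k b := by
  have hrung : (polyacene h).Adj (k, j) (k, j') :=
    adj_iff.2 (.inr ⟨rfl, hk, Fin.val_ne_of_ne hj⟩)
  calc (polyacene h).dist (a, j) (b, j')
      ≤ (polyacene h).dist (a, j) (k, j) + (polyacene h).dist (k, j) (k, j')
          + (polyacene h).dist (k, j') (b, j') :=
        connected.dist_triangle.trans
          (Nat.add_le_add_right connected.dist_triangle _)
    _ ≤ Nat.dist a k + 1 + Nat.dist k b := by
        gcongr
        · exact dist_row_le a k j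
        · exact (dist_eq_one_iff_adj.2 hrung).le
        · exact dist_row_le k b j'

theorem dist_fst_le_length {u v : Fin (2 * h + 1) × Fin 2} (p : (polyacene h).Walk u v) :
    Nat.dist u.1 v.1 ≤ p.length := by
  induction p with
  | nil => simp
  | cons hadj q ih =>
    have := adj_iff.1 hadj
    simp only [Walk.length_cons, Nat.dist] at *
    omega

theorem exists_rung_of_snd_ne {u v : Fin (2 * h + 1) × Fin 2} (p : (polyacene h).Walk u v)
    (huv : (u.2 : ℕ) ≠ v.2) :
    ∃ k : ℕ, k % 2 = 0 ∧ Nat.dist u.1 k + 1 + Nat.dist k v.1 ≤ p.length := by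
  induction p with
  | nil => exact absurd rfl huv
  | @cons a b c hadj q ih =>
    rcases adj_iff.1 hadj with hstep | hrung
    · obtain ⟨k, hk, hle⟩ := ih (by omega)
      refine ⟨k, hk, ?_⟩
      simp only [Walk.length_cons, Nat.dist] at *
      omega
    · have := dist_fst_le_length q
      refine ⟨a.1, hrung.2.1, ?_⟩
      simp only [Walk.length_cons, Nat.dist] at *
      omega

/-- The distance between `(x, j)` and `(y, j')` in `polyacene h`: changing rows requires a rung,
hence an even column. -/
def ladderDist (x j y j' : ℕ) : ℕ :=
  if j = j' then Nat.dist x y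
  else if x = y ∧ x % 2 = 1 then 3
  else Nat.dist x y + 1

theorem ladderDist_le_length {u v : Fin (2 * h + 1) × Fin 2} (p : (polyacene h).Walk u v) :
    ladderDist u.1 u.2 v.1 v.2 ≤ p.length := by
  unfold ladderDist
  split_ifs with hrow
  · exact dist_fst_le_length p
  all_goals
    obtain ⟨k, hk, hle⟩ := exists_rung_of_snd_ne p hrow
    simp only [Nat.dist] at *
    omega

theorem dist_eq_ladderDist (u v : Fin (2 * h + 1) × Fin 2) :
    (polyacene h).dist u v = ladderDist u.1 u.2 v.1 v.2 := by
  refine le_antisymm ?_ ?_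
  · obtain ⟨⟨a, ha⟩, j⟩ := u
    obtain ⟨b, j'⟩ := v
    unfold ladderDist
    split_ifs with hrow hcol
    · obtain rfl : j = j' := Fin.ext hrow
      exact dist_row_le _ b j
    all_goals
      have hj : j ≠ j' := fun hj => hrow (congrArg Fin.val hj)
      have hb := b.isLt
      simp only at hrow hcol ⊢
      -- the nearest even column to `a`, on the side of `b`
      refine (dist_le_of_even (k := ⟨if a % 2 = 0 then a else if b ≤ a then a - 1
        else a + 1, by split_ifs <;> omega⟩) (by dsimp only; split_ifs <;> omega) hj).trans ?_
      dsimp only [Nat.dist]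
      split_ifs <;> omega
  · obtain ⟨p, hp⟩ := connected.exists_walk_length_eq_dist u v
    exact hp ▸ ladderDist_le_length p

/-- Edges of `polyacene h`: `inl (i, j)` joins columns `i` and `i + 1` in row `j`, and `inr t` is
the rung at column `2 t`. -/
abbrev Edge (h : ℕ) := (Fin (2 * h) × Fin 2) ⊕ Fin (h + 1)

def Edge.fst : Edge h → Fin (2 * h + 1) × Fin 2
  | .inl (i, j) => (⟨i, by omega⟩, j)
  | .inr t => (⟨2 * t, by omega⟩, 0)

def Edge.snd : Edge h → Fin (2 * h + 1) × Fin 2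
  | .inl (i, j) => (⟨i + 1, by omega⟩, j)
  | .inr t => (⟨2 * t, by omega⟩, 1)

theorem Edge.adj (a : Edge h) : (polyacene h).Adj a.fst a.snd := by
  rcases a with ⟨i, j⟩ | t
  · exact adj_iff.2 (.inl ⟨rfl, by simp [Edge.fst, Edge.snd, Nat.dist]⟩)
  · exact adj_iff.2 (.inr ⟨rfl, by simp [Edge.fst], by simp [Edge.fst, Edge.snd]⟩)

def Edge.toEdgeSet (a : Edge h) : (polyacene h).edgeSet := ⟨s(a.fst, a.snd), a.adj⟩

theorem Edge.toEdgeSet_injective : Function.Injective (Edge.toEdgeSet (h := h)) := by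
  intro a b hab
  have hs : s(a.fst, a.snd) = s(b.fst, b.snd) := congrArg Subtype.val hab
  rw [Sym2.eq_iff] at hs
  rcases a with ⟨i, j⟩ | t <;> rcases b with ⟨i', j'⟩ | t' <;>
    simp only [Edge.fst, Edge.snd, Prod.ext_iff, Fin.ext_iff, Fin.val_zero, Fin.val_one] at hs
  · simp only [Sum.inl.injEq, Prod.ext_iff, Fin.ext_iff]; omega
  · omega
  · omega
  · simp only [Sum.inr.injEq, Fin.ext_iff]; omega

theorem Edge.toEdgeSet_surjective : Function.Surjective (Edge.toEdgeSet (h := h)) := by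
  rintro ⟨e, he⟩
  induction e using Sym2.ind with
  | _ u v =>
  rw [mem_edgeSet] at he
  have := u.1.isLt
  have := v.1.isLt
  rcases adj_iff.1 he with ⟨hrow, hd⟩ | ⟨hcol, hev, hne⟩
  · simp only [Nat.dist] at hd
    obtain ⟨i, hi, hcols⟩ : ∃ i < 2 * h, ((u.1 : ℕ) = i ∧ (v.1 : ℕ) = i + 1) ∨
        ((v.1 : ℕ) = i ∧ (u.1 : ℕ) = i + 1) := by
      rcases Nat.le_total u.1 v.1 with huv | huv
      · exact ⟨u.1, by omega, .inl ⟨rfl, by omega⟩⟩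
      · exact ⟨v.1, by omega, .inr ⟨rfl, by omega⟩⟩
    refine ⟨.inl (⟨i, hi⟩, u.2), Subtype.ext ?_⟩
    simp only [Edge.toEdgeSet, Edge.fst, Edge.snd, Sym2.eq_iff, Prod.ext_iff, Fin.ext_iff,
      and_true]
    omega
  · refine ⟨.inr ⟨u.1 / 2, by omega⟩, Subtype.ext ?_⟩
    simp only [Edge.toEdgeSet, Edge.fst, Edge.snd, Sym2.eq_iff, Prod.ext_iff, Fin.ext_iff,
      Fin.val_zero, Fin.val_one]
    omega

noncomputable def edgeEquiv (h : ℕ) : Edge h ≃ (polyacene h).edgeSet :=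
  .ofBijective Edge.toEdgeSet ⟨Edge.toEdgeSet_injective, Edge.toEdgeSet_surjective⟩

/-- The line-graph distance between the horizontal edges starting at columns `x` and `y` of
different rows. -/
def crossDist (x y : ℕ) : ℕ :=
  if x = y then 2
  else if Nat.dist x y = 1 then (if max x y % 2 = 0 then 2 else 3)
  else Nat.dist x y + 1

/-- The line-graph distance between the horizontal edge starting at column `x` and the rung at
column `2 t`. -/
def rungDist (x t : ℕ) : ℕ := max (x + 1 - 2 * t) (2 * t - x)

def edgeDist : Edge h → Edge h → ℕ
  | .inl (i, j), .inl (i', j') => if (j : ℕ) = j' then Nat.dist i i' else crossDist i i'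
  | .inl (i, _), .inr t => rungDist i t
  | .inr t, .inl (i, _) => rungDist i t
  | .inr t, .inr t' => 2 * Nat.dist t t' + 1

theorem edgeDist_eq {a b : Edge h} (hab : a ≠ b) :
    edgeDist a b =
      min (min (ladderDist a.fst.1 a.fst.2 b.fst.1 b.fst.2)
          (ladderDist a.fst.1 a.fst.2 b.snd.1 b.snd.2))
        (min (ladderDist a.snd.1 a.snd.2 b.fst.1 b.fst.2)
          (ladderDist a.snd.1 a.snd.2 b.snd.1 b.snd.2)) + 1 := by
  rcases a with ⟨⟨x, hx⟩, ⟨j, hj⟩⟩ | ⟨t, ht⟩ <;>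
    rcases b with ⟨⟨y, hy⟩, ⟨j', hj'⟩⟩ | ⟨t', ht'⟩ <;>
    simp only [ne_eq, Sum.inl.injEq, Sum.inr.injEq, Prod.ext_iff, Fin.ext_iff, not_and,
      reduceCtorEq, not_false_eq_true] at hab <;>
    simp only [edgeDist, Edge.fst, Edge.snd, Fin.val_zero, Fin.val_one] <;>
    simp only [ladderDist, crossDist, rungDist] <;>
    split_ifs <;> (try simp only [Nat.dist] at *) <;> omega

theorem lineGraph_dist_edgeEquiv {a b : Edge h} (hab : a ≠ b) :
    (polyacene h).lineGraph.dist (edgeEquiv h a) (edgeEquiv h b) = edgeDist a b := by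
  rw [connected.lineGraph_dist rfl rfl ((edgeEquiv h).injective.ne hab),
    dist_eq_ladderDist, dist_eq_ladderDist, dist_eq_ladderDist, dist_eq_ladderDist,
    edgeDist_eq hab]

theorem crossDist_comm (x y : ℕ) : crossDist x y = crossDist y x := by
  simp only [crossDist, Nat.dist_comm x y, max_comm x y, eq_comm (a := x)]

theorem crossDist_of_lt {x y : ℕ} (hxy : x < y) :
    crossDist x y = if x + 1 = y ∧ y % 2 = 1 then 3 else y - x + 1 := by
  unfold crossDist
  split_ifs <;> (try simp only [Nat.dist] at *) <;> omega

def crossSum (n : ℕ) : ℚ := ∑ i ∈ range n, ∑ j ∈ range n, hyperWeight (crossDist i j)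

theorem crossSum_succ (n : ℕ) :
    crossSum (n + 1) = crossSum n + 2 * ∑ i ∈ range n, hyperWeight (crossDist i n) + 6 := by
  have hdiag : hyperWeight (crossDist n n) = 6 := by norm_num [crossDist, hyperWeight]
  simp only [crossSum, sum_range_succ_sum_range_succ, hdiag, crossDist_comm n]
  ring

theorem crossSum_two_mul (h : ℕ) :
    crossSum (2 * h) = (8 * h ^ 4 + 24 * h ^ 3 + 22 * h ^ 2 + 54 * h) / 3 := by
  induction h with
  | zero => simp [crossSum]
  | succ h ih =>
    have heven : ∑ i ∈ range (2 * h), hyperWeight (crossDist i (2 * h)) =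
        ∑ d ∈ range (2 * h), hyperWeight (d + 2) :=
      sum_range_eq_of_reflect fun i hi => by
        rw [crossDist_of_lt hi, if_neg (by omega)]
        congr 1
        omega
    have hodd : ∑ i ∈ range (2 * h + 1), hyperWeight (crossDist i (2 * h + 1)) =
        ∑ d ∈ range (2 * h), hyperWeight (d + 3) + hyperWeight 3 := by
      rw [sum_range_succ]
      congr 1
      · exact sum_range_eq_of_reflect fun i hi => by
          rw [crossDist_of_lt (by omega), if_neg (by omega)]
          congr 1
          omega
      · rw [crossDist_of_lt (by omega), if_pos (by omega)]
    rw [show 2 * (h + 1) = 2 * h + 1 + 1 by ring, crossSum_succ, crossSum_succ, ih, heven, hodd,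
      sum_range_hyperWeight (a := 1) (b := 2) (fun d => by ring),
      sum_range_hyperWeight (a := 1) (b := 3) (fun d => by ring)]
    norm_num [hyperWeight]
    ring

def rungSum (h : ℕ) : ℚ := ∑ i ∈ range (2 * h), ∑ t ∈ range (h + 1), hyperWeight (rungDist i t)

theorem rungSum_eq (h : ℕ) : rungSum h = (4 * h ^ 4 + 16 * h ^ 3 + 20 * h ^ 2 + 8 * h) / 3 := by
  induction h with
  | zero => simp [rungSum]
  | succ h ih =>
    have hsplit : rungSum (h + 1) = rungSum h
        + ∑ i ∈ range (2 * h + 2), hyperWeight (rungDist i (h + 1))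
        + ∑ t ∈ range (h + 1), hyperWeight (rungDist (2 * h) t)
        + ∑ t ∈ range (h + 1), hyperWeight (rungDist (2 * h + 1) t) := by
      simp only [rungSum, show 2 * (h + 1) = 2 * h + 1 + 1 by ring, sum_range_succ (n := h + 1),
        sum_add_distrib, sum_range_succ (n := 2 * h + 1), sum_range_succ (n := 2 * h)]
      ring
    have hnew : ∑ i ∈ range (2 * h + 2), hyperWeight (rungDist i (h + 1)) =
        ∑ d ∈ range (2 * h + 2), hyperWeight (1 * d + 1) :=
      sum_range_eq_of_reflect fun i hi => by simp only [rungDist]; congr 1; omega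
    have heven : ∑ t ∈ range (h + 1), hyperWeight (rungDist (2 * h) t) =
        ∑ d ∈ range (h + 1), hyperWeight (2 * d + 1) :=
      sum_range_eq_of_reflect fun t ht => by simp only [rungDist]; congr 1; omega
    have hodd : ∑ t ∈ range (h + 1), hyperWeight (rungDist (2 * h + 1) t) =
        ∑ d ∈ range (h + 1), hyperWeight (2 * d + 2) :=
      sum_range_eq_of_reflect fun t ht => by simp only [rungDist]; congr 1; omega
    rw [hsplit, ih, hnew, heven, hodd, sum_range_hyperWeight (fun _ => rfl),
      sum_range_hyperWeight (fun _ => rfl), sum_range_hyperWeight (fun _ => rfl)]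
    push_cast
    ring

theorem sum_hyperWeight_edgeDist (h : ℕ) :
    ∑ x : Edge h, ∑ y : Edge h, (if x = y then 0 else hyperWeight (edgeDist x y)) =
      2 * offDiagDistSum hyperWeight (2 * h) + 2 * crossSum (2 * h) + 4 * rungSum h +
        offDiagDistSum (fun d => hyperWeight (2 * d + 1)) (h + 1) := by
  simp only [Fintype.sum_sum_type, Fintype.sum_prod_type, Fin.sum_univ_two, edgeDist,
    Sum.inl.injEq, Sum.inr.injEq, Prod.mk.injEq, Fin.ext_iff, Fin.val_zero, Fin.val_one,
    reduceCtorEq, if_false, if_true, and_true, and_false, zero_ne_one, one_ne_zero,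
    sum_add_distrib]
  have hrow : ∑ x : Fin (2 * h), ∑ y : Fin (2 * h),
      (if (x : ℕ) = y then 0 else hyperWeight (Nat.dist x y)) =
        offDiagDistSum hyperWeight (2 * h) :=
    sum_fin_sum_fin_eq_sum_range _ _ fun i j => if i = j then 0 else hyperWeight (Nat.dist i j)
  have hcross : ∑ x : Fin (2 * h), ∑ y : Fin (2 * h), hyperWeight (crossDist x y) =
      crossSum (2 * h) :=
    sum_fin_sum_fin_eq_sum_range _ _ fun i j => hyperWeight (crossDist i j)
  have hrung : ∑ x : Fin (2 * h), ∑ t : Fin (h + 1), hyperWeight (rungDist x t) = rungSum h :=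
    sum_fin_sum_fin_eq_sum_range _ _ fun i t => hyperWeight (rungDist i t)
  have hrung' : ∑ t : Fin (h + 1), ∑ x : Fin (2 * h), hyperWeight (rungDist x t) = rungSum h :=
    sum_comm.trans hrung
  have hrungs : ∑ t : Fin (h + 1), ∑ t' : Fin (h + 1),
      (if (t : ℕ) = t' then 0 else hyperWeight (2 * Nat.dist t t' + 1)) =
        offDiagDistSum (fun d => hyperWeight (2 * d + 1)) (h + 1) :=
    sum_fin_sum_fin_eq_sum_range _ _ fun t t' =>
      if t = t' then 0 else hyperWeight (2 * Nat.dist t t' + 1)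
  rw [hrow, hcross, hrung, hrung', hrungs]
  ring

theorem edgeHyperWienerLine_eq_sum_edgeDist (h : ℕ) :
    edgeHyperWienerLine (polyacene h) =
      (∑ x : Edge h, ∑ y : Edge h, if x = y then 0 else hyperWeight (edgeDist x y)) / 4 := by
  rw [edgeHyperWienerLine_eq_sum _ (edgeEquiv h)]
  congr 1
  refine sum_congr rfl fun x _ => sum_congr rfl fun y _ => ?_
  split_ifs with hxy
  · rfl
  · rw [lineGraph_dist_edgeEquiv hxy]

end Polyacene

theorem edgeHyperWiener_polyacene_general (h : ℕ) :
    edgeHyperWienerLine (polyacene h) =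
      (h : ℚ) * (25 * (h : ℚ) ^ 3 + 71 * (h : ℚ) ^ 2 + 77 * (h : ℚ) + 79) / 6 := by
  rw [Polyacene.edgeHyperWienerLine_eq_sum_edgeDist, Polyacene.sum_hyperWeight_edgeDist,
    offDiagDistSum_hyperWeight, offDiagDistSum_hyperWeight_two_mul_add_one,
    Polyacene.crossSum_two_mul, Polyacene.rungSum_eq]
  push_cast
  ring

/-- For every `h ≥ 1`, the edge-hyper-Wiener index of the linear polyacene
`L_h` satisfies `WW_e(L_h) = h(25h³ + 71h² + 77h + 79)/6`. -/
theorem edgeHyperWiener_polyacene (h : ℕ) (hh : 1 ≤ h) :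
    edgeHyperWienerLine (polyacene h) =
      (h : ℚ) * (25 * (h : ℚ) ^ 3 + 71 * (h : ℚ) ^ 2 + 77 * (h : ℚ) + 79) / 6 :=
  edgeHyperWiener_polyacene_general h
end
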